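/- arXiv:2109.09695 — 9 statements merged into one kernel-verified Lean document; each statement's English description precedes it below -/
import Mathlib

section
/- Let a, ε₀, b, w, m, c, d ∈ ℝ and ν₀, ν₁, ν₂, θ₀, θ₁, θ₂ ∈ ℝ satisfy aν₁² + ε₀ν₂² ≠ 0, ν₁² + ν₂² − m(ν₀ + cν₂)² ≠ 0, and the constraint 2aν₁θ₁ + 2ε₀ν₂θ₂ + ν₀ = 0. Define K = (mν₀ + (mc−d)ν₂)/(ν₁² + ν₂² − m(ν₀ + cν₂)²), A = (b − mw − wK(mν₀ + (mc−d)ν₂))/(2(aν₁² + ε₀ν₂²)), B = (aθ₁² + ε₀θ₂² + θ₀)/(aν₁² + ε₀ν₂²). Suppose Ψ, Φ : ℝ → ℝ are twice differentiable with Φ'(ν) = K Ψ(ν)² and Ψ''(ν) = 2A Ψ(ν)³ + B Ψ(ν) for all ν ∈ ℝ. Then ψ(x,y,t) = e^{i(θ₁x + θ₂y + θ₀t)} Ψ(ν₁x + ν₂y + ν₀t) and φ(x,y,t) = Φ(ν₁x + ν₂y + ν₀t) form a classical solution of the BR/ZR system. -/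
/-- Partial derivative in the first slot. -/
noncomputable def pdX {E : Type*} [NormedAddCommGroup E] [NormedSpace ℝ E]
    (f : ℝ → ℝ → ℝ → E) : ℝ → ℝ → ℝ → E :=
  fun x y t => deriv (fun s => f s y t) x

/-- Partial derivative in the second slot. -/
noncomputable def pdY {E : Type*} [NormedAddCommGroup E] [NormedSpace ℝ E]
    (f : ℝ → ℝ → ℝ → E) : ℝ → ℝ → ℝ → E :=
  fun x y t => deriv (fun s => f x s t) y

/-- Partial derivative in the third slot. -/
noncomputable def pdT {E : Type*} [NormedAddCommGroup E] [NormedSpace ℝ E]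
    (f : ℝ → ℝ → ℝ → E) : ℝ → ℝ → ℝ → E :=
  fun x y t => deriv (fun s => f x y s) t

/-- `(ψ, φ)` is a classical solution of the Benney--Roskes/Zakharov--Rubenchik system
with real parameters `a, ε₀, b, w, m, c, d`: both functions are twice continuously
differentiable on `ℝ³` and the two equations (E1), (E2) hold everywhere. -/
def IsBRZRSolution (a ε₀ b w m c d : ℝ)
    (ψ : ℝ → ℝ → ℝ → ℂ) (φ : ℝ → ℝ → ℝ → ℝ) : Prop :=
  ContDiff ℝ 2 (fun p : ℝ × ℝ × ℝ => ψ p.1 p.2.1 p.2.2) ∧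
  ContDiff ℝ 2 (fun p : ℝ × ℝ × ℝ => φ p.1 p.2.1 p.2.2) ∧
  (∀ x y t : ℝ,
    Complex.I * pdT ψ x y t + (a : ℂ) * pdX (pdX ψ) x y t + (ε₀ : ℂ) * pdY (pdY ψ) x y t
      = ((b - w * m : ℝ) : ℂ) * ((Complex.normSq (ψ x y t) : ℝ) : ℂ) * ψ x y t
        - (w : ℂ) * ψ x y t *
          ((m * pdT φ x y t + (m * c - d) * pdY φ x y t : ℝ) : ℂ)) ∧
  (∀ x y t : ℝ,
    pdX (pdX φ) x y t + (1 - m * c ^ 2) * pdY (pdY φ) x y t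
      - m * pdT (pdT φ) x y t - 2 * m * c * pdY (pdT φ) x y t
      = m * pdT (fun x y t => Complex.normSq (ψ x y t)) x y t
        + (m * c - d) * pdY (fun x y t => Complex.normSq (ψ x y t)) x y t)

lemma affine_hasDerivAt' (β c x : ℝ) : HasDerivAt (fun s : ℝ => β * s + c) β x := by
  simpa using ((hasDerivAt_id x).const_mul β).add_const c

lemma keyR (F F' : ℝ → ℝ) (hF : ∀ u, HasDerivAt F (F' u) u) (β c x : ℝ) :
    HasDerivAt (fun s => F (β * s + c)) (β * F' (β * x + c)) x := by
  simpa [Function.comp_def, mul_comm] using (hF (β*x+c)).comp x (affine_hasDerivAt' β c x)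

lemma keyC (F F' : ℝ → ℂ) (hF : ∀ u, HasDerivAt F (F' u) u) (α cθ β cν x : ℝ) :
    HasDerivAt (fun s : ℝ => Complex.exp (Complex.I * ((α * s + cθ : ℝ) : ℂ)) * F (β * s + cν))
      (Complex.exp (Complex.I * ((α * x + cθ : ℝ) : ℂ)) *
        (Complex.I * (α : ℂ) * F (β * x + cν) + (β : ℂ) * F' (β * x + cν))) x := by
  have h1 : HasDerivAt (fun s : ℝ => Complex.I * ((α * s + cθ : ℝ) : ℂ)) (Complex.I * (α:ℂ)) x :=
    ((affine_hasDerivAt' α cθ x).ofReal_comp).const_mul Complex.I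
  have h2 := h1.cexp
  have h3 : HasDerivAt (fun s : ℝ => F (β * s + cν)) (β • F' (β*x+cν)) x :=
    (hF (β*x+cν)).scomp x (affine_hasDerivAt' β cν x)
  have h4 := h2.mul h3
  convert h4 using 1
  · rfl
  · rfl
  simp [Complex.real_smul]
  ring

lemma keyC2 (F F' F'' : ℝ → ℂ) (hF : ∀ u, HasDerivAt F (F' u) u)
    (hF' : ∀ u, HasDerivAt F' (F'' u) u) (α cθ β cν x : ℝ) :
    deriv (fun s : ℝ => deriv (fun r : ℝ =>
        Complex.exp (Complex.I * ((α * r + cθ : ℝ) : ℂ)) * F (β * r + cν)) s) x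
      = Complex.exp (Complex.I * ((α * x + cθ : ℝ) : ℂ)) *
          (Complex.I * α * (Complex.I * α * F (β*x+cν) + β * F' (β*x+cν))
            + β * (Complex.I * α * F' (β*x+cν) + β * F'' (β*x+cν))) := by
  have h1 : (fun s : ℝ => deriv (fun r : ℝ =>
        Complex.exp (Complex.I * ((α * r + cθ : ℝ) : ℂ)) * F (β * r + cν)) s)
      = fun s : ℝ => Complex.exp (Complex.I * ((α * s + cθ : ℝ) : ℂ)) *
          (Complex.I * α * F (β*s+cν) + β * F' (β*s+cν)) := by
    funext s; exact (keyC F F' hF α cθ β cν s).deriv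
  rw [h1]
  exact (keyC (fun v => Complex.I*α*F v + β*F' v) (fun v => Complex.I*α*F' v + β*F'' v)
      (fun u => ((hF u).const_mul _).add ((hF' u).const_mul _)) α cθ β cν x).deriv

lemma keyR2 (F F' F'' : ℝ → ℝ) (hF : ∀ u, HasDerivAt F (F' u) u)
    (hF' : ∀ u, HasDerivAt F' (F'' u) u) (β c x : ℝ) :
    deriv (fun s : ℝ => deriv (fun r : ℝ => F (β * r + c)) s) x
      = β * (β * F'' (β * x + c)) := by
  have h1 : (fun s : ℝ => deriv (fun r : ℝ => F (β * r + c)) s)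
      = fun s : ℝ => β * F' (β * s + c) := by
    funext s; exact (keyR F F' hF β c s).deriv
  rw [h1]
  exact ((keyR F' F'' hF' β c x).const_mul β).deriv


/-- the travelling-wave ansatz reduces the BR/ZR system to the ODE system
`Φ' = KΨ²`, `Ψ'' = 2AΨ³ + BΨ`: any twice differentiable solution of the ODEs gives a
classical solution of the BR/ZR system. -/
theorem brzr_travelling_wave_solution
    (a ε₀ b w m c d ν₀ ν₁ ν₂ θ₀ θ₁ θ₂ : ℝ)
    (h1 : a * ν₁ ^ 2 + ε₀ * ν₂ ^ 2 ≠ 0)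
    (h2 : ν₁ ^ 2 + ν₂ ^ 2 - m * (ν₀ + c * ν₂) ^ 2 ≠ 0)
    (h3 : 2 * a * ν₁ * θ₁ + 2 * ε₀ * ν₂ * θ₂ + ν₀ = 0)
    (K A B : ℝ)
    (hK : K = (m * ν₀ + (m * c - d) * ν₂) / (ν₁ ^ 2 + ν₂ ^ 2 - m * (ν₀ + c * ν₂) ^ 2))
    (hA : A = (b - m * w - w * K * (m * ν₀ + (m * c - d) * ν₂)) / (2 * (a * ν₁ ^ 2 + ε₀ * ν₂ ^ 2)))
    (hB : B = (a * θ₁ ^ 2 + ε₀ * θ₂ ^ 2 + θ₀) / (a * ν₁ ^ 2 + ε₀ * ν₂ ^ 2))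
    (Ψ Φ : ℝ → ℝ)
    (hΨ : Differentiable ℝ Ψ) (hΨ' : Differentiable ℝ (deriv Ψ))
    (hΦ : Differentiable ℝ Φ) (hΦ' : Differentiable ℝ (deriv Φ))
    (hODE1 : ∀ ν : ℝ, deriv Φ ν = K * Ψ ν ^ 2)
    (hODE2 : ∀ ν : ℝ, deriv (deriv Ψ) ν = 2 * A * Ψ ν ^ 3 + B * Ψ ν) :
    IsBRZRSolution a ε₀ b w m c d
      (fun x y t => Complex.exp (Complex.I * ((θ₁ * x + θ₂ * y + θ₀ * t : ℝ) : ℂ)) *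
        ((Ψ (ν₁ * x + ν₂ * y + ν₀ * t) : ℝ) : ℂ))
      (fun x y t => Φ (ν₁ * x + ν₂ * y + ν₀ * t)) := by
  -- real algebraic relations
  have rK : K * (ν₁ ^ 2 + ν₂ ^ 2 - m * (ν₀ + c * ν₂) ^ 2) = m * ν₀ + (m * c - d) * ν₂ := by
    rw [hK]; field_simp
  have rA : 2 * A * (a * ν₁ ^ 2 + ε₀ * ν₂ ^ 2)
      = b - m * w - w * K * (m * ν₀ + (m * c - d) * ν₂) := by
    rw [hA]; field_simp
    exact mul_div_cancel_right₀ _ (by rwa [mul_comm (ν₂ ^ 2) ε₀])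
  have rB : B * (a * ν₁ ^ 2 + ε₀ * ν₂ ^ 2) = a * θ₁ ^ 2 + ε₀ * θ₂ ^ 2 + θ₀ := by
    rw [hB]; field_simp
  -- derivative families
  have hFΨ : ∀ u : ℝ, HasDerivAt (fun v : ℝ => ((Ψ v : ℝ) : ℂ)) ((deriv Ψ u : ℝ) : ℂ) u :=
    fun u => (hΨ u).hasDerivAt.ofReal_comp
  have hFΨ' : ∀ u : ℝ, HasDerivAt (fun v : ℝ => ((deriv Ψ v : ℝ) : ℂ))
      ((deriv (deriv Ψ) u : ℝ) : ℂ) u := fun u => (hΨ' u).hasDerivAt.ofReal_comp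
  have hΨsq : ∀ u : ℝ, HasDerivAt (fun v : ℝ => Ψ v ^ 2) (2 * Ψ u * deriv Ψ u) u := by
    intro u
    have := (hΨ u).hasDerivAt.pow 2
    convert this using 1
    · rfl
    · rfl
    · rfl
    norm_num
  have hdΦ : ∀ u : ℝ, HasDerivAt (deriv Φ) (K * (2 * Ψ u * deriv Ψ u)) u := by
    intro u
    have hfe : deriv Φ = fun v => K * Ψ v ^ 2 := funext hODE1
    rw [hfe]
    exact (hΨsq u).const_mul K
  have hΦd : ∀ u : ℝ, HasDerivAt Φ (deriv Φ u) u := fun u => (hΦ u).hasDerivAt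
  have hns : ∀ r z : ℝ,
      Complex.normSq (Complex.exp (Complex.I * (r : ℂ)) * ((z : ℝ) : ℂ)) = z ^ 2 := by
    intro r z
    rw [Complex.normSq_mul, ← Complex.sq_norm, Complex.norm_exp]
    simp [Complex.normSq_ofReal, sq]
  -- smoothness of the profiles
  have hΨ2 : ContDiff ℝ 2 Ψ := by
    rw [show (2 : WithTop ℕ∞) = 1 + 1 from rfl, contDiff_succ_iff_deriv]
    refine ⟨hΨ, by simp, ?_⟩
    rw [contDiff_one_iff_deriv]
    refine ⟨hΨ', ?_⟩
    have hc := hΨ.continuous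
    rw [funext hODE2]
    fun_prop
  have hΦ2 : ContDiff ℝ 2 Φ := by
    rw [show (2 : WithTop ℕ∞) = 1 + 1 from rfl, contDiff_succ_iff_deriv]
    refine ⟨hΦ, by simp, ?_⟩
    rw [contDiff_one_iff_deriv]
    refine ⟨hΦ', ?_⟩
    have hc := hΨ.continuous
    have hc' := hΨ'.continuous
    have : deriv (deriv Φ) = fun u => K * (2 * Ψ u * deriv Ψ u) := funext fun u => (hdΦ u).deriv
    rw [this]
    fun_prop
  have hν3 : ContDiff ℝ 2 (fun p : ℝ × ℝ × ℝ => ν₁ * p.1 + ν₂ * p.2.1 + ν₀ * p.2.2) := by fun_prop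
  have hθ3 : ContDiff ℝ 2 (fun p : ℝ × ℝ × ℝ => θ₁ * p.1 + θ₂ * p.2.1 + θ₀ * p.2.2) := by fun_prop
  unfold IsBRZRSolution
  refine ⟨?_, ?_, ?_, ?_⟩
  · exact (Complex.contDiff_exp.comp
        (contDiff_const.mul (Complex.ofRealCLM.contDiff.comp hθ3))).mul
      (Complex.ofRealCLM.contDiff.comp (hΨ2.comp hν3))
  · exact hΦ2.comp hν3
  · -- E1
    intro x y t
    simp only [pdX, pdY, pdT]
    have hT : deriv (fun s : ℝ => Complex.exp (Complex.I * ((θ₁*x+θ₂*y+θ₀*s : ℝ):ℂ)) *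
          ((Ψ (ν₁*x+ν₂*y+ν₀*s) : ℝ):ℂ)) t
        = Complex.exp (Complex.I * ((θ₁*x+θ₂*y+θ₀*t : ℝ):ℂ)) *
          (Complex.I * (θ₀:ℂ) * ((Ψ (ν₁*x+ν₂*y+ν₀*t) : ℝ):ℂ)
            + (ν₀:ℂ) * ((deriv Ψ (ν₁*x+ν₂*y+ν₀*t) : ℝ):ℂ)) := by
      have e : (fun s : ℝ => Complex.exp (Complex.I * ((θ₁*x+θ₂*y+θ₀*s : ℝ):ℂ)) *
            ((Ψ (ν₁*x+ν₂*y+ν₀*s) : ℝ):ℂ))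
          = fun s : ℝ => Complex.exp (Complex.I * ((θ₀*s+(θ₁*x+θ₂*y) : ℝ):ℂ)) *
            ((Ψ (ν₀*s+(ν₁*x+ν₂*y)) : ℝ):ℂ) := by
        funext s
        rw [show θ₁*x+θ₂*y+θ₀*s = θ₀*s+(θ₁*x+θ₂*y) from by ring,
            show ν₁*x+ν₂*y+ν₀*s = ν₀*s+(ν₁*x+ν₂*y) from by ring]
      rw [e]
      refine ((keyC _ _ hFΨ θ₀ (θ₁*x+θ₂*y) ν₀ (ν₁*x+ν₂*y) t).deriv).trans ?_
      rw [show θ₀*t+(θ₁*x+θ₂*y) = θ₁*x+θ₂*y+θ₀*t from by ring,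
          show ν₀*t+(ν₁*x+ν₂*y) = ν₁*x+ν₂*y+ν₀*t from by ring]
    have hXX : deriv (fun s : ℝ => deriv (fun r : ℝ =>
          Complex.exp (Complex.I * ((θ₁*r+θ₂*y+θ₀*t : ℝ):ℂ)) *
          ((Ψ (ν₁*r+ν₂*y+ν₀*t) : ℝ):ℂ)) s) x
        = Complex.exp (Complex.I * ((θ₁*x+θ₂*y+θ₀*t : ℝ):ℂ)) *
          (Complex.I * (θ₁:ℂ) * (Complex.I * (θ₁:ℂ) * ((Ψ (ν₁*x+ν₂*y+ν₀*t) : ℝ):ℂ)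
              + (ν₁:ℂ) * ((deriv Ψ (ν₁*x+ν₂*y+ν₀*t) : ℝ):ℂ))
            + (ν₁:ℂ) * (Complex.I * (θ₁:ℂ) * ((deriv Ψ (ν₁*x+ν₂*y+ν₀*t) : ℝ):ℂ)
              + (ν₁:ℂ) * ((deriv (deriv Ψ) (ν₁*x+ν₂*y+ν₀*t) : ℝ):ℂ))) := by
      have e : (fun r : ℝ => Complex.exp (Complex.I * ((θ₁*r+θ₂*y+θ₀*t : ℝ):ℂ)) *
            ((Ψ (ν₁*r+ν₂*y+ν₀*t) : ℝ):ℂ))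
          = fun r : ℝ => Complex.exp (Complex.I * ((θ₁*r+(θ₂*y+θ₀*t) : ℝ):ℂ)) *
            ((Ψ (ν₁*r+(ν₂*y+ν₀*t)) : ℝ):ℂ) := by
        funext r
        rw [show θ₁*r+θ₂*y+θ₀*t = θ₁*r+(θ₂*y+θ₀*t) from by ring,
            show ν₁*r+ν₂*y+ν₀*t = ν₁*r+(ν₂*y+ν₀*t) from by ring]
      simp only [e]
      refine (keyC2 _ _ _ hFΨ hFΨ' θ₁ (θ₂*y+θ₀*t) ν₁ (ν₂*y+ν₀*t) x).trans ?_
      rw [show θ₁*x+(θ₂*y+θ₀*t) = θ₁*x+θ₂*y+θ₀*t from by ring,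
          show ν₁*x+(ν₂*y+ν₀*t) = ν₁*x+ν₂*y+ν₀*t from by ring]
    have hYY : deriv (fun s : ℝ => deriv (fun r : ℝ =>
          Complex.exp (Complex.I * ((θ₁*x+θ₂*r+θ₀*t : ℝ):ℂ)) *
          ((Ψ (ν₁*x+ν₂*r+ν₀*t) : ℝ):ℂ)) s) y
        = Complex.exp (Complex.I * ((θ₁*x+θ₂*y+θ₀*t : ℝ):ℂ)) *
          (Complex.I * (θ₂:ℂ) * (Complex.I * (θ₂:ℂ) * ((Ψ (ν₁*x+ν₂*y+ν₀*t) : ℝ):ℂ)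
              + (ν₂:ℂ) * ((deriv Ψ (ν₁*x+ν₂*y+ν₀*t) : ℝ):ℂ))
            + (ν₂:ℂ) * (Complex.I * (θ₂:ℂ) * ((deriv Ψ (ν₁*x+ν₂*y+ν₀*t) : ℝ):ℂ)
              + (ν₂:ℂ) * ((deriv (deriv Ψ) (ν₁*x+ν₂*y+ν₀*t) : ℝ):ℂ))) := by
      have e : (fun r : ℝ => Complex.exp (Complex.I * ((θ₁*x+θ₂*r+θ₀*t : ℝ):ℂ)) *
            ((Ψ (ν₁*x+ν₂*r+ν₀*t) : ℝ):ℂ))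
          = fun r : ℝ => Complex.exp (Complex.I * ((θ₂*r+(θ₁*x+θ₀*t) : ℝ):ℂ)) *
            ((Ψ (ν₂*r+(ν₁*x+ν₀*t)) : ℝ):ℂ) := by
        funext r
        rw [show θ₁*x+θ₂*r+θ₀*t = θ₂*r+(θ₁*x+θ₀*t) from by ring,
            show ν₁*x+ν₂*r+ν₀*t = ν₂*r+(ν₁*x+ν₀*t) from by ring]
      simp only [e]
      refine (keyC2 _ _ _ hFΨ hFΨ' θ₂ (θ₁*x+θ₀*t) ν₂ (ν₁*x+ν₀*t) y).trans ?_
      rw [show θ₂*y+(θ₁*x+θ₀*t) = θ₁*x+θ₂*y+θ₀*t from by ring,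
          show ν₂*y+(ν₁*x+ν₀*t) = ν₁*x+ν₂*y+ν₀*t from by ring]
    have hφT : deriv (fun s : ℝ => Φ (ν₁*x+ν₂*y+ν₀*s)) t
        = ν₀ * (K * Ψ (ν₁*x+ν₂*y+ν₀*t) ^ 2) := by
      have e : (fun s : ℝ => Φ (ν₁*x+ν₂*y+ν₀*s)) = fun s : ℝ => Φ (ν₀*s+(ν₁*x+ν₂*y)) := by
        funext s; rw [show ν₁*x+ν₂*y+ν₀*s = ν₀*s+(ν₁*x+ν₂*y) from by ring]
      rw [e]
      refine ((keyR Φ (deriv Φ) hΦd ν₀ (ν₁*x+ν₂*y) t).deriv).trans ?_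
      rw [hODE1, show ν₀*t+(ν₁*x+ν₂*y) = ν₁*x+ν₂*y+ν₀*t from by ring]
    have hφY : deriv (fun s : ℝ => Φ (ν₁*x+ν₂*s+ν₀*t)) y
        = ν₂ * (K * Ψ (ν₁*x+ν₂*y+ν₀*t) ^ 2) := by
      have e : (fun s : ℝ => Φ (ν₁*x+ν₂*s+ν₀*t)) = fun s : ℝ => Φ (ν₂*s+(ν₁*x+ν₀*t)) := by
        funext s; rw [show ν₁*x+ν₂*s+ν₀*t = ν₂*s+(ν₁*x+ν₀*t) from by ring]
      rw [e]
      refine ((keyR Φ (deriv Φ) hΦd ν₂ (ν₁*x+ν₀*t) y).deriv).trans ?_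
      rw [hODE1, show ν₂*y+(ν₁*x+ν₀*t) = ν₁*x+ν₂*y+ν₀*t from by ring]
    rw [hT, hXX, hYY, hφT, hφY, hns, hODE2]
    have c3 := congrArg (Complex.ofReal) h3
    push_cast at c3
    have cA := congrArg (Complex.ofReal) rA
    push_cast at cA
    have cB := congrArg (Complex.ofReal) rB
    push_cast at cB
    push_cast
    linear_combination (Complex.I * Complex.exp (Complex.I * ((θ₁*x:ℂ)+(θ₂*y:ℂ)+(θ₀*t:ℂ))) *
          ((deriv Ψ (ν₁*x+ν₂*y+ν₀*t) : ℝ):ℂ)) * c3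
      + (Complex.exp (Complex.I * ((θ₁*x:ℂ)+(θ₂*y:ℂ)+(θ₀*t:ℂ))) *
          ((Ψ (ν₁*x+ν₂*y+ν₀*t) : ℝ):ℂ)) * cB
      + (Complex.exp (Complex.I * ((θ₁*x:ℂ)+(θ₂*y:ℂ)+(θ₀*t:ℂ))) *
          ((Ψ (ν₁*x+ν₂*y+ν₀*t) : ℝ):ℂ)^3) * cA
      + (Complex.exp (Complex.I * ((θ₁*x:ℂ)+(θ₂*y:ℂ)+(θ₀*t:ℂ))) *
          ((Ψ (ν₁*x+ν₂*y+ν₀*t) : ℝ):ℂ) *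
          ((θ₀:ℂ) + (a:ℂ)*(θ₁:ℂ)^2 + (ε₀:ℂ)*(θ₂:ℂ)^2)) * Complex.I_sq
  · -- E2
    intro x y t
    simp only [pdX, pdY, pdT]
    have hXXφ : deriv (fun s : ℝ => deriv (fun r : ℝ => Φ (ν₁*r+ν₂*y+ν₀*t)) s) x
        = ν₁ * (ν₁ * (K * (2 * Ψ (ν₁*x+ν₂*y+ν₀*t) * deriv Ψ (ν₁*x+ν₂*y+ν₀*t)))) := by
      have e : (fun r : ℝ => Φ (ν₁*r+ν₂*y+ν₀*t)) = fun r : ℝ => Φ (ν₁*r+(ν₂*y+ν₀*t)) := by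
        funext r; rw [show ν₁*r+ν₂*y+ν₀*t = ν₁*r+(ν₂*y+ν₀*t) from by ring]
      simp only [e]
      refine (keyR2 Φ (deriv Φ) _ hΦd hdΦ ν₁ (ν₂*y+ν₀*t) x).trans ?_
      rw [show ν₁*x+(ν₂*y+ν₀*t) = ν₁*x+ν₂*y+ν₀*t from by ring]
    have hYYφ : deriv (fun s : ℝ => deriv (fun r : ℝ => Φ (ν₁*x+ν₂*r+ν₀*t)) s) y
        = ν₂ * (ν₂ * (K * (2 * Ψ (ν₁*x+ν₂*y+ν₀*t) * deriv Ψ (ν₁*x+ν₂*y+ν₀*t)))) := by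
      have e : (fun r : ℝ => Φ (ν₁*x+ν₂*r+ν₀*t)) = fun r : ℝ => Φ (ν₂*r+(ν₁*x+ν₀*t)) := by
        funext r; rw [show ν₁*x+ν₂*r+ν₀*t = ν₂*r+(ν₁*x+ν₀*t) from by ring]
      simp only [e]
      refine (keyR2 Φ (deriv Φ) _ hΦd hdΦ ν₂ (ν₁*x+ν₀*t) y).trans ?_
      rw [show ν₂*y+(ν₁*x+ν₀*t) = ν₁*x+ν₂*y+ν₀*t from by ring]
    have hTTφ : deriv (fun s : ℝ => deriv (fun r : ℝ => Φ (ν₁*x+ν₂*y+ν₀*r)) s) t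
        = ν₀ * (ν₀ * (K * (2 * Ψ (ν₁*x+ν₂*y+ν₀*t) * deriv Ψ (ν₁*x+ν₂*y+ν₀*t)))) := by
      have e : (fun r : ℝ => Φ (ν₁*x+ν₂*y+ν₀*r)) = fun r : ℝ => Φ (ν₀*r+(ν₁*x+ν₂*y)) := by
        funext r; rw [show ν₁*x+ν₂*y+ν₀*r = ν₀*r+(ν₁*x+ν₂*y) from by ring]
      simp only [e]
      refine (keyR2 Φ (deriv Φ) _ hΦd hdΦ ν₀ (ν₁*x+ν₂*y) t).trans ?_
      rw [show ν₀*t+(ν₁*x+ν₂*y) = ν₁*x+ν₂*y+ν₀*t from by ring]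
    have hYTφ : deriv (fun s : ℝ => deriv (fun r : ℝ => Φ (ν₁*x+ν₂*s+ν₀*r)) t) y
        = ν₂ * (ν₀ * (K * (2 * Ψ (ν₁*x+ν₂*y+ν₀*t) * deriv Ψ (ν₁*x+ν₂*y+ν₀*t)))) := by
      have inner : ∀ s : ℝ, deriv (fun r : ℝ => Φ (ν₁*x+ν₂*s+ν₀*r)) t
          = ν₀ * (K * Ψ (ν₂*s+(ν₁*x+ν₀*t)) ^ 2) := by
        intro s
        have e : (fun r : ℝ => Φ (ν₁*x+ν₂*s+ν₀*r)) = fun r : ℝ => Φ (ν₀*r+(ν₁*x+ν₂*s)) := by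
          funext r; rw [show ν₁*x+ν₂*s+ν₀*r = ν₀*r+(ν₁*x+ν₂*s) from by ring]
        rw [e]
        refine ((keyR Φ (deriv Φ) hΦd ν₀ (ν₁*x+ν₂*s) t).deriv).trans ?_
        rw [hODE1, show ν₀*t+(ν₁*x+ν₂*s) = ν₂*s+(ν₁*x+ν₀*t) from by ring]
      simp only [inner]
      refine ((keyR (fun v => ν₀ * (K * Ψ v ^ 2)) (fun v => ν₀ * (K * (2 * Ψ v * deriv Ψ v)))
          (fun u => ((hΨsq u).const_mul K).const_mul ν₀) ν₂ (ν₁*x+ν₀*t) y).deriv).trans ?_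
      rw [show ν₂*y+(ν₁*x+ν₀*t) = ν₁*x+ν₂*y+ν₀*t from by ring]
    have hnT : deriv (fun s : ℝ => Complex.normSq
          (Complex.exp (Complex.I * ((θ₁*x+θ₂*y+θ₀*s : ℝ):ℂ)) * ((Ψ (ν₁*x+ν₂*y+ν₀*s) : ℝ):ℂ))) t
        = ν₀ * (2 * Ψ (ν₁*x+ν₂*y+ν₀*t) * deriv Ψ (ν₁*x+ν₂*y+ν₀*t)) := by
      have e : (fun s : ℝ => Complex.normSq
            (Complex.exp (Complex.I * ((θ₁*x+θ₂*y+θ₀*s : ℝ):ℂ)) * ((Ψ (ν₁*x+ν₂*y+ν₀*s) : ℝ):ℂ)))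
          = fun s : ℝ => Ψ (ν₀*s+(ν₁*x+ν₂*y)) ^ 2 := by
        funext s
        rw [hns, show ν₁*x+ν₂*y+ν₀*s = ν₀*s+(ν₁*x+ν₂*y) from by ring]
      rw [e]
      refine ((keyR (fun v => Ψ v ^ 2) _ hΨsq ν₀ (ν₁*x+ν₂*y) t).deriv).trans ?_
      rw [show ν₀*t+(ν₁*x+ν₂*y) = ν₁*x+ν₂*y+ν₀*t from by ring]
    have hnY : deriv (fun s : ℝ => Complex.normSq
          (Complex.exp (Complex.I * ((θ₁*x+θ₂*s+θ₀*t : ℝ):ℂ)) * ((Ψ (ν₁*x+ν₂*s+ν₀*t) : ℝ):ℂ))) y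
        = ν₂ * (2 * Ψ (ν₁*x+ν₂*y+ν₀*t) * deriv Ψ (ν₁*x+ν₂*y+ν₀*t)) := by
      have e : (fun s : ℝ => Complex.normSq
            (Complex.exp (Complex.I * ((θ₁*x+θ₂*s+θ₀*t : ℝ):ℂ)) * ((Ψ (ν₁*x+ν₂*s+ν₀*t) : ℝ):ℂ)))
          = fun s : ℝ => Ψ (ν₂*s+(ν₁*x+ν₀*t)) ^ 2 := by
        funext s
        rw [hns, show ν₁*x+ν₂*s+ν₀*t = ν₂*s+(ν₁*x+ν₀*t) from by ring]
      rw [e]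
      refine ((keyR (fun v => Ψ v ^ 2) _ hΨsq ν₂ (ν₁*x+ν₀*t) y).deriv).trans ?_
      rw [show ν₂*y+(ν₁*x+ν₀*t) = ν₁*x+ν₂*y+ν₀*t from by ring]
    rw [hXXφ, hYYφ, hTTφ, hYTφ, hnT, hnY]
    linear_combination (2 * Ψ (ν₁*x+ν₂*y+ν₀*t) * deriv Ψ (ν₁*x+ν₂*y+ν₀*t)) * rK
end

section
/- Let a, ε₀, b, w, m, c, d ∈ ℝ and ν₀, ν₁, ν₂, θ₀, θ₁, θ₂ ∈ ℝ satisfy aν₁² + ε₀ν₂² ≠ 0, ν₁² + ν₂² − m(ν₀ + cν₂)² ≠ 0, and 2aν₁θ₁ + 2ε₀ν₂θ₂ + ν₀ = 0. Define K = (mν₀ + (mc−d)ν₂)/(ν₁² + ν₂² − m(ν₀ + cν₂)²), A = (b − mw − wK(mν₀ + (mc−d)ν₂))/(2(aν₁² + ε₀ν₂²)), B = (aθ₁² + ε₀θ₂² + θ₀)/(aν₁² + ε₀ν₂²), and assume A < 0 and B > 0. Then for any δ₀, Φ₀ ∈ ℝ, the pair ψ(x,y,t) = e^{i(θ₁x +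 θ₂y + θ₀t)} √(−B/A) sech(√B(ν + δ₀)) and φ(x,y,t) = −(K√B/A) tanh(√B(ν + δ₀)) + Φ₀, where ν = ν₁x + ν₂y + ν₀t and sech(s) = 1/cosh(s), is a classical solution (a line soliton) of the BR/ZR system. -/
noncomputable def solG (A B δ₀ : ℝ) (v : ℝ) : ℝ :=
  Real.sqrt (-B / A) * (1 / Real.cosh (Real.sqrt B * (v + δ₀)))

noncomputable def solG1 (A B δ₀ : ℝ) (v : ℝ) : ℝ :=
  -(Real.sqrt (-B / A) * Real.sqrt B) *
    (Real.sinh (Real.sqrt B * (v + δ₀)) / Real.cosh (Real.sqrt B * (v + δ₀)) ^ 2)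

lemma hasDerivAt_arg (B δ₀ : ℝ) (v : ℝ) :
    HasDerivAt (fun v : ℝ => Real.sqrt B * (v + δ₀)) (Real.sqrt B) v := by
  simpa using ((hasDerivAt_id v).add_const δ₀).const_mul (Real.sqrt B)

lemma solG_deriv (A B δ₀ : ℝ) (v : ℝ) :
    HasDerivAt (solG A B δ₀) (solG1 A B δ₀ v) v := by
  have hu := hasDerivAt_arg B δ₀ v
  have hc : HasDerivAt (fun v : ℝ => Real.cosh (Real.sqrt B * (v + δ₀)))
      (Real.sinh (Real.sqrt B * (v + δ₀)) * Real.sqrt B) v :=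
    (Real.hasDerivAt_cosh _).comp v hu
  have hcne : Real.cosh (Real.sqrt B * (v + δ₀)) ≠ 0 := (Real.cosh_pos _).ne'
  have h := (hc.inv hcne).const_mul (Real.sqrt (-B / A))
  unfold solG solG1
  simp only [one_div]
  refine HasDerivAt.congr_deriv h (Eq.symm ?_)
  field_simp

lemma solG1_deriv (A B δ₀ : ℝ) (hAneg : A < 0) (hBpos : 0 < B) (v : ℝ) :
    HasDerivAt (solG1 A B δ₀)
      (B * solG A B δ₀ v + 2 * A * solG A B δ₀ v ^ 3) v := by
  have hu := hasDerivAt_arg B δ₀ v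
  have hc : HasDerivAt (fun v : ℝ => Real.cosh (Real.sqrt B * (v + δ₀)))
      (Real.sinh (Real.sqrt B * (v + δ₀)) * Real.sqrt B) v :=
    (Real.hasDerivAt_cosh _).comp v hu
  have hs : HasDerivAt (fun v : ℝ => Real.sinh (Real.sqrt B * (v + δ₀)))
      (Real.cosh (Real.sqrt B * (v + δ₀)) * Real.sqrt B) v :=
    (Real.hasDerivAt_sinh _).comp v hu
  have hcne : Real.cosh (Real.sqrt B * (v + δ₀)) ≠ 0 := (Real.cosh_pos _).ne'
  have hc2 : HasDerivAt (fun v : ℝ => Real.cosh (Real.sqrt B * (v + δ₀)) ^ 2)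
      ((2 : ℕ) * Real.cosh (Real.sqrt B * (v + δ₀)) ^ 1 *
        (Real.sinh (Real.sqrt B * (v + δ₀)) * Real.sqrt B)) v := hc.pow 2
  have hc2ne : Real.cosh (Real.sqrt B * (v + δ₀)) ^ 2 ≠ 0 := pow_ne_zero _ hcne
  have h := (hs.div hc2 hc2ne).const_mul (-(Real.sqrt (-B / A) * Real.sqrt B))
  unfold solG1 solG
  refine HasDerivAt.congr_deriv h (Eq.symm ?_)
  have hA0 : A ≠ 0 := hAneg.ne
  have hsB : Real.sqrt B ^ 2 = B := Real.sq_sqrt hBpos.le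
  have hBA : (0:ℝ) ≤ -B / A := by
    rw [div_nonneg_iff]; right; constructor <;> linarith
  have hal : Real.sqrt (-B / A) ^ 2 * A = -B := by
    rw [Real.sq_sqrt hBA]; field_simp
  have hsh : Real.sinh (Real.sqrt B * (v + δ₀)) ^ 2
      = Real.cosh (Real.sqrt B * (v + δ₀)) ^ 2 - 1 := Real.sinh_sq _
  set ch := Real.cosh (Real.sqrt B * (v + δ₀))
  set sh := Real.sinh (Real.sqrt B * (v + δ₀))
  set al := Real.sqrt (-B / A)
  set sq := Real.sqrt B
  field_simp
  linear_combination (al*ch^2 - 2*al*sh^2) * hsB + (-(2*al*B)) * hsh +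
    (2*al) * hal

noncomputable def solH (K A B δ₀ Φ₀ : ℝ) (v : ℝ) : ℝ :=
  -(K * Real.sqrt B / A) * Real.tanh (Real.sqrt B * (v + δ₀)) + Φ₀

lemma solH_deriv (K A B δ₀ Φ₀ : ℝ) (hAneg : A < 0) (hBpos : 0 < B) (v : ℝ) :
    HasDerivAt (solH K A B δ₀ Φ₀) (K * solG A B δ₀ v ^ 2) v := by
  have hu := hasDerivAt_arg B δ₀ v
  have hc : HasDerivAt (fun v : ℝ => Real.cosh (Real.sqrt B * (v + δ₀)))
      (Real.sinh (Real.sqrt B * (v + δ₀)) * Real.sqrt B) v :=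
    (Real.hasDerivAt_cosh _).comp v hu
  have hs : HasDerivAt (fun v : ℝ => Real.sinh (Real.sqrt B * (v + δ₀)))
      (Real.cosh (Real.sqrt B * (v + δ₀)) * Real.sqrt B) v :=
    (Real.hasDerivAt_sinh _).comp v hu
  have hcne : Real.cosh (Real.sqrt B * (v + δ₀)) ≠ 0 := (Real.cosh_pos _).ne'
  have h := ((hs.div hc hcne).const_mul (-(K * Real.sqrt B / A))).add_const Φ₀
  unfold solH solG
  simp only [Real.tanh_eq_sinh_div_cosh]
  refine HasDerivAt.congr_deriv h (Eq.symm ?_)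
  have hA0 : A ≠ 0 := hAneg.ne
  have hsB : Real.sqrt B ^ 2 = B := Real.sq_sqrt hBpos.le
  have hBA : (0:ℝ) ≤ -B / A := by
    rw [div_nonneg_iff]; right; constructor <;> linarith
  have hal : Real.sqrt (-B / A) ^ 2 * A = -B := by
    rw [Real.sq_sqrt hBA]; field_simp
  have hsh : Real.sinh (Real.sqrt B * (v + δ₀)) ^ 2
      = Real.cosh (Real.sqrt B * (v + δ₀)) ^ 2 - 1 := Real.sinh_sq _
  set ch := Real.cosh (Real.sqrt B * (v + δ₀))
  set sh := Real.sinh (Real.sqrt B * (v + δ₀))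
  set al := Real.sqrt (-B / A)
  set sq := Real.sqrt B
  field_simp
  linear_combination K*hal + (K*ch^2 - K*sh^2)*hsB + (-(K*B))*hsh

lemma normSq_exp_mul (r z : ℝ) :
    Complex.normSq (Complex.exp (Complex.I * (r : ℂ)) * ((z : ℝ) : ℂ)) = z ^ 2 := by
  simp [Complex.normSq_mul, Complex.normSq_eq_norm_sq, Complex.norm_exp, sq]

lemma aux_mixed (f f' : ℝ → ℝ) (L M : ℝ → ℝ) (lc mc p : ℝ)
    (Hf : HasDerivAt f (f' (M p)) (M p))
    (HL : HasDerivAt L lc p) (HM : HasDerivAt M mc p) :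
    HasDerivAt (fun q => Complex.exp (Complex.I * ((L q : ℝ) : ℂ)) * ((f (M q) : ℝ) : ℂ))
      (Complex.exp (Complex.I * ((L p : ℝ) : ℂ)) *
        (Complex.I * (lc : ℂ) * ((f (M p) : ℝ) : ℂ) + (mc : ℂ) * ((f' (M p) : ℝ) : ℂ))) p := by
  have h1 : HasDerivAt (fun q : ℝ => Complex.exp (Complex.I * ((L q : ℝ) : ℂ)))
      (Complex.exp (Complex.I * ((L p : ℝ) : ℂ)) * (Complex.I * (lc : ℂ))) p := by
    have hl : HasDerivAt (fun q : ℝ => Complex.I * ((L q : ℝ) : ℂ)) (Complex.I * (lc : ℂ)) p :=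
      (HL.ofReal_comp).const_mul Complex.I
    simpa using hl.cexp
  have h2 : HasDerivAt (fun q : ℝ => ((f (M q) : ℝ) : ℂ)) (((f' (M p) * mc : ℝ) : ℝ) : ℂ) p :=
    HasDerivAt.ofReal_comp (Hf.comp p HM)
  have h3 := h1.mul h2
  refine HasDerivAt.congr_deriv h3 (Eq.symm ?_)
  push_cast
  ring

lemma aux_mixed2 (f₀ f₁ f₀' f₁' : ℝ → ℝ) (c₀ c₁ : ℂ) (L M : ℝ → ℝ) (lc mc p : ℝ)
    (H0 : HasDerivAt f₀ (f₀' (M p)) (M p)) (H1 : HasDerivAt f₁ (f₁' (M p)) (M p))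
    (HL : HasDerivAt L lc p) (HM : HasDerivAt M mc p) :
    HasDerivAt (fun q => Complex.exp (Complex.I * ((L q : ℝ) : ℂ)) *
        (c₀ * ((f₀ (M q) : ℝ) : ℂ) + c₁ * ((f₁ (M q) : ℝ) : ℂ)))
      (Complex.exp (Complex.I * ((L p : ℝ) : ℂ)) *
        (Complex.I * (lc : ℂ) * (c₀ * ((f₀ (M p) : ℝ) : ℂ) + c₁ * ((f₁ (M p) : ℝ) : ℂ))
          + (mc : ℂ) * (c₀ * ((f₀' (M p) : ℝ) : ℂ) + c₁ * ((f₁' (M p) : ℝ) : ℂ)))) p := by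
  have h1 : HasDerivAt (fun q : ℝ => Complex.exp (Complex.I * ((L q : ℝ) : ℂ)))
      (Complex.exp (Complex.I * ((L p : ℝ) : ℂ)) * (Complex.I * (lc : ℂ))) p := by
    have hl : HasDerivAt (fun q : ℝ => Complex.I * ((L q : ℝ) : ℂ)) (Complex.I * (lc : ℂ)) p :=
      (HL.ofReal_comp).const_mul Complex.I
    simpa using hl.cexp
  have h20 : HasDerivAt (fun q : ℝ => c₀ * ((f₀ (M q) : ℝ) : ℂ))
      (c₀ * (((f₀' (M p) * mc : ℝ) : ℝ) : ℂ)) p :=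
    (HasDerivAt.ofReal_comp (H0.comp p HM)).const_mul c₀
  have h21 : HasDerivAt (fun q : ℝ => c₁ * ((f₁ (M q) : ℝ) : ℂ))
      (c₁ * (((f₁' (M p) * mc : ℝ) : ℝ) : ℂ)) p :=
    (HasDerivAt.ofReal_comp (H1.comp p HM)).const_mul c₁
  have h3 := h1.mul (h20.add h21)
  refine HasDerivAt.congr_deriv h3 (Eq.symm ?_)
  push_cast
  simp only [Pi.add_apply]
  ring

/-- the line-soliton (sech/tanh) travelling-wave solution of the BR/ZR system
in the case `A < 0`, `B > 0`. -/
theorem brzr_line_soliton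
    (a ε₀ b w m c d ν₀ ν₁ ν₂ θ₀ θ₁ θ₂ : ℝ)
    (h1 : a * ν₁ ^ 2 + ε₀ * ν₂ ^ 2 ≠ 0)
    (h2 : ν₁ ^ 2 + ν₂ ^ 2 - m * (ν₀ + c * ν₂) ^ 2 ≠ 0)
    (h3 : 2 * a * ν₁ * θ₁ + 2 * ε₀ * ν₂ * θ₂ + ν₀ = 0)
    (K A B : ℝ)
    (hK : K = (m * ν₀ + (m * c - d) * ν₂) / (ν₁ ^ 2 + ν₂ ^ 2 - m * (ν₀ + c * ν₂) ^ 2))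
    (hA : A = (b - m * w - w * K * (m * ν₀ + (m * c - d) * ν₂)) / (2 * (a * ν₁ ^ 2 + ε₀ * ν₂ ^ 2)))
    (hB : B = (a * θ₁ ^ 2 + ε₀ * θ₂ ^ 2 + θ₀) / (a * ν₁ ^ 2 + ε₀ * ν₂ ^ 2))
    (hAneg : A < 0) (hBpos : 0 < B) (δ₀ Φ₀ : ℝ) :
    IsBRZRSolution a ε₀ b w m c d
      (fun x y t => Complex.exp (Complex.I * ((θ₁ * x + θ₂ * y + θ₀ * t : ℝ) : ℂ)) *
        ((Real.sqrt (-B / A) *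
          (1 / Real.cosh (Real.sqrt B * ((ν₁ * x + ν₂ * y + ν₀ * t) + δ₀))) : ℝ) : ℂ))
      (fun x y t => -(K * Real.sqrt B / A) *
          Real.tanh (Real.sqrt B * ((ν₁ * x + ν₂ * y + ν₀ * t) + δ₀)) + Φ₀) := by
  have hA0 : A ≠ 0 := hAneg.ne
  -- real algebraic identities
  have r1 : θ₀ + a * θ₁ ^ 2 + ε₀ * θ₂ ^ 2 = B * (a * ν₁ ^ 2 + ε₀ * ν₂ ^ 2) := by
    rw [hB]; field_simp; ring
  have r2 : ν₀ + 2 * a * θ₁ * ν₁ + 2 * ε₀ * θ₂ * ν₂ = 0 := by linarith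
  have r3 : b - m * w - w * K * (m * ν₀ + (m * c - d) * ν₂)
      = 2 * A * (a * ν₁ ^ 2 + ε₀ * ν₂ ^ 2) := by
    rw [hA, mul_div_assoc', div_mul_eq_mul_div, mul_assoc (2:ℝ),
      mul_div_mul_left _ _ two_ne_zero, mul_div_cancel_right₀ _ h1]
  have r4 : K * (ν₁ ^ 2 + ν₂ ^ 2 - m * (ν₀ + c * ν₂) ^ 2) = m * ν₀ + (m * c - d) * ν₂ := by
    rw [hK]; field_simp
  set Ψ : ℝ → ℝ → ℝ → ℂ := fun x y t =>
      Complex.exp (Complex.I * ((θ₁ * x + θ₂ * y + θ₀ * t : ℝ) : ℂ)) *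
        ((Real.sqrt (-B / A) *
          (1 / Real.cosh (Real.sqrt B * ((ν₁ * x + ν₂ * y + ν₀ * t) + δ₀))) : ℝ) : ℂ)
    with hΨdef
  set Φ : ℝ → ℝ → ℝ → ℝ := fun x y t =>
      -(K * Real.sqrt B / A) * Real.tanh (Real.sqrt B * ((ν₁ * x + ν₂ * y + ν₀ * t) + δ₀)) + Φ₀
    with hΦdef
  -- linear slice derivatives
  have MX : ∀ x y t : ℝ, HasDerivAt (fun s : ℝ => ν₁ * s + ν₂ * y + ν₀ * t) ν₁ x :=
    fun x y t => by
      simpa using (((hasDerivAt_id x).const_mul ν₁).add_const (ν₂ * y)).add_const (ν₀ * t)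
  have MY : ∀ x y t : ℝ, HasDerivAt (fun s : ℝ => ν₁ * x + ν₂ * s + ν₀ * t) ν₂ y :=
    fun x y t => by
      simpa using ((((hasDerivAt_id y).const_mul ν₂).const_add (ν₁ * x)).add_const (ν₀ * t))
  have MT : ∀ x y t : ℝ, HasDerivAt (fun s : ℝ => ν₁ * x + ν₂ * y + ν₀ * s) ν₀ t :=
    fun x y t => by
      simpa using (((hasDerivAt_id t).const_mul ν₀).const_add (ν₁ * x + ν₂ * y))
  have LX : ∀ x y t : ℝ, HasDerivAt (fun s : ℝ => θ₁ * s + θ₂ * y + θ₀ * t) θ₁ x :=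
    fun x y t => by
      simpa using (((hasDerivAt_id x).const_mul θ₁).add_const (θ₂ * y)).add_const (θ₀ * t)
  have LY : ∀ x y t : ℝ, HasDerivAt (fun s : ℝ => θ₁ * x + θ₂ * s + θ₀ * t) θ₂ y :=
    fun x y t => by
      simpa using ((((hasDerivAt_id y).const_mul θ₂).const_add (θ₁ * x)).add_const (θ₀ * t))
  have LT : ∀ x y t : ℝ, HasDerivAt (fun s : ℝ => θ₁ * x + θ₂ * y + θ₀ * s) θ₀ t :=
    fun x y t => by
      simpa using (((hasDerivAt_id t).const_mul θ₀).const_add (θ₁ * x + θ₂ * y))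
  have hns : ∀ x y t : ℝ, Complex.normSq (Ψ x y t)
      = solG A B δ₀ (ν₁ * x + ν₂ * y + ν₀ * t) ^ 2 :=
    fun x y t => normSq_exp_mul _ _
  refine ⟨?_, ?_, ?_, ?_⟩
  · -- smoothness of Ψ
    have hΘ : ContDiff ℝ 2 (fun p : ℝ × ℝ × ℝ => θ₁ * p.1 + θ₂ * p.2.1 + θ₀ * p.2.2) := by
      fun_prop
    have harg : ContDiff ℝ 2 (fun p : ℝ × ℝ × ℝ =>
        Real.sqrt B * ((ν₁ * p.1 + ν₂ * p.2.1 + ν₀ * p.2.2) + δ₀)) := by fun_prop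
    have hgreal : ContDiff ℝ 2 (fun p : ℝ × ℝ × ℝ =>
        Real.sqrt (-B / A) *
          (1 / Real.cosh (Real.sqrt B * ((ν₁ * p.1 + ν₂ * p.2.1 + ν₀ * p.2.2) + δ₀)))) :=
      contDiff_const.mul (contDiff_const.div (Real.contDiff_cosh.comp harg)
        (fun p => (Real.cosh_pos _).ne'))
    have hexp : ContDiff ℝ 2 (fun p : ℝ × ℝ × ℝ =>
        Complex.exp (Complex.I * ((θ₁ * p.1 + θ₂ * p.2.1 + θ₀ * p.2.2 : ℝ) : ℂ))) :=
      Complex.contDiff_exp.comp (contDiff_const.mul (Complex.ofRealCLM.contDiff.comp hΘ))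
    exact hexp.mul (Complex.ofRealCLM.contDiff.comp hgreal)
  · -- smoothness of Φ
    have harg : ContDiff ℝ 2 (fun p : ℝ × ℝ × ℝ =>
        Real.sqrt B * ((ν₁ * p.1 + ν₂ * p.2.1 + ν₀ * p.2.2) + δ₀)) := by fun_prop
    show ContDiff ℝ 2 (fun p : ℝ × ℝ × ℝ =>
      -(K * Real.sqrt B / A) *
        Real.tanh (Real.sqrt B * ((ν₁ * p.1 + ν₂ * p.2.1 + ν₀ * p.2.2) + δ₀)) + Φ₀)
    simp only [Real.tanh_eq_sinh_div_cosh]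
    exact (contDiff_const.mul ((Real.contDiff_sinh.comp harg).div
      (Real.contDiff_cosh.comp harg) (fun p => (Real.cosh_pos _).ne'))).add contDiff_const
  · -- equation E1
    intro x y t
    have hT : pdT Ψ x y t
        = Complex.exp (Complex.I * ((θ₁ * x + θ₂ * y + θ₀ * t : ℝ) : ℂ)) *
            (Complex.I * (θ₀ : ℂ) * ((solG A B δ₀ (ν₁ * x + ν₂ * y + ν₀ * t) : ℝ) : ℂ)
              + (ν₀ : ℂ) * ((solG1 A B δ₀ (ν₁ * x + ν₂ * y + ν₀ * t) : ℝ) : ℂ)) :=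
      (aux_mixed (solG A B δ₀) (solG1 A B δ₀) _ _ θ₀ ν₀ t (solG_deriv A B δ₀ _)
        (LT x y t) (MT x y t)).deriv
    have hXfun : pdX Ψ = fun x y t =>
        Complex.exp (Complex.I * ((θ₁ * x + θ₂ * y + θ₀ * t : ℝ) : ℂ)) *
            (Complex.I * (θ₁ : ℂ) * ((solG A B δ₀ (ν₁ * x + ν₂ * y + ν₀ * t) : ℝ) : ℂ)
              + (ν₁ : ℂ) * ((solG1 A B δ₀ (ν₁ * x + ν₂ * y + ν₀ * t) : ℝ) : ℂ)) := by
      funext x y t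
      exact (aux_mixed (solG A B δ₀) (solG1 A B δ₀) _ _ θ₁ ν₁ x (solG_deriv A B δ₀ _)
        (LX x y t) (MX x y t)).deriv
    have hYfun : pdY Ψ = fun x y t =>
        Complex.exp (Complex.I * ((θ₁ * x + θ₂ * y + θ₀ * t : ℝ) : ℂ)) *
            (Complex.I * (θ₂ : ℂ) * ((solG A B δ₀ (ν₁ * x + ν₂ * y + ν₀ * t) : ℝ) : ℂ)
              + (ν₂ : ℂ) * ((solG1 A B δ₀ (ν₁ * x + ν₂ * y + ν₀ * t) : ℝ) : ℂ)) := by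
      funext x y t
      exact (aux_mixed (solG A B δ₀) (solG1 A B δ₀) _ _ θ₂ ν₂ y (solG_deriv A B δ₀ _)
        (LY x y t) (MY x y t)).deriv
    have hXX : pdX (fun x y t =>
        Complex.exp (Complex.I * ((θ₁ * x + θ₂ * y + θ₀ * t : ℝ) : ℂ)) *
            (Complex.I * (θ₁ : ℂ) * ((solG A B δ₀ (ν₁ * x + ν₂ * y + ν₀ * t) : ℝ) : ℂ)
              + (ν₁ : ℂ) * ((solG1 A B δ₀ (ν₁ * x + ν₂ * y + ν₀ * t) : ℝ) : ℂ))) x y t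
        = Complex.exp (Complex.I * ((θ₁ * x + θ₂ * y + θ₀ * t : ℝ) : ℂ)) *
            (Complex.I * (θ₁ : ℂ) *
              (Complex.I * (θ₁ : ℂ) * ((solG A B δ₀ (ν₁ * x + ν₂ * y + ν₀ * t) : ℝ) : ℂ)
                + (ν₁ : ℂ) * ((solG1 A B δ₀ (ν₁ * x + ν₂ * y + ν₀ * t) : ℝ) : ℂ))
              + (ν₁ : ℂ) *
              (Complex.I * (θ₁ : ℂ) * ((solG1 A B δ₀ (ν₁ * x + ν₂ * y + ν₀ * t) : ℝ) : ℂ)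
                + (ν₁ : ℂ) * ((B * solG A B δ₀ (ν₁ * x + ν₂ * y + ν₀ * t)
                    + 2 * A * solG A B δ₀ (ν₁ * x + ν₂ * y + ν₀ * t) ^ 3 : ℝ) : ℂ))) :=
      (aux_mixed2 (solG A B δ₀) (solG1 A B δ₀) (solG1 A B δ₀)
        (fun v => B * solG A B δ₀ v + 2 * A * solG A B δ₀ v ^ 3)
        (Complex.I * (θ₁ : ℂ)) ((ν₁ : ℝ) : ℂ) _ _ θ₁ ν₁ x
        (solG_deriv A B δ₀ _) (solG1_deriv A B δ₀ hAneg hBpos _)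
        (LX x y t) (MX x y t)).deriv
    have hYY : pdY (fun x y t =>
        Complex.exp (Complex.I * ((θ₁ * x + θ₂ * y + θ₀ * t : ℝ) : ℂ)) *
            (Complex.I * (θ₂ : ℂ) * ((solG A B δ₀ (ν₁ * x + ν₂ * y + ν₀ * t) : ℝ) : ℂ)
              + (ν₂ : ℂ) * ((solG1 A B δ₀ (ν₁ * x + ν₂ * y + ν₀ * t) : ℝ) : ℂ))) x y t
        = Complex.exp (Complex.I * ((θ₁ * x + θ₂ * y + θ₀ * t : ℝ) : ℂ)) *
            (Complex.I * (θ₂ : ℂ) *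
              (Complex.I * (θ₂ : ℂ) * ((solG A B δ₀ (ν₁ * x + ν₂ * y + ν₀ * t) : ℝ) : ℂ)
                + (ν₂ : ℂ) * ((solG1 A B δ₀ (ν₁ * x + ν₂ * y + ν₀ * t) : ℝ) : ℂ))
              + (ν₂ : ℂ) *
              (Complex.I * (θ₂ : ℂ) * ((solG1 A B δ₀ (ν₁ * x + ν₂ * y + ν₀ * t) : ℝ) : ℂ)
                + (ν₂ : ℂ) * ((B * solG A B δ₀ (ν₁ * x + ν₂ * y + ν₀ * t)
                    + 2 * A * solG A B δ₀ (ν₁ * x + ν₂ * y + ν₀ * t) ^ 3 : ℝ) : ℂ))) :=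
      (aux_mixed2 (solG A B δ₀) (solG1 A B δ₀) (solG1 A B δ₀)
        (fun v => B * solG A B δ₀ v + 2 * A * solG A B δ₀ v ^ 3)
        (Complex.I * (θ₂ : ℂ)) ((ν₂ : ℝ) : ℂ) _ _ θ₂ ν₂ y
        (solG_deriv A B δ₀ _) (solG1_deriv A B δ₀ hAneg hBpos _)
        (LY x y t) (MY x y t)).deriv
    have hΦT : pdT Φ x y t
        = K * solG A B δ₀ (ν₁ * x + ν₂ * y + ν₀ * t) ^ 2 * ν₀ :=
      ((solH_deriv K A B δ₀ Φ₀ hAneg hBpos _).comp t (MT x y t)).deriv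
    have hΦY : pdY Φ x y t
        = K * solG A B δ₀ (ν₁ * x + ν₂ * y + ν₀ * t) ^ 2 * ν₂ :=
      ((solH_deriv K A B δ₀ Φ₀ hAneg hBpos _).comp y (MY x y t)).deriv
    have hψval : Ψ x y t
        = Complex.exp (Complex.I * ((θ₁ * x + θ₂ * y + θ₀ * t : ℝ) : ℂ)) *
            ((solG A B δ₀ (ν₁ * x + ν₂ * y + ν₀ * t) : ℝ) : ℂ) := rfl
    rw [hT, hXfun, hYfun, hXX, hYY, hΦT, hΦY, hns, hψval]
    have c1 : (θ₀ : ℂ) + (a : ℂ) * (θ₁ : ℂ) ^ 2 + (ε₀ : ℂ) * (θ₂ : ℂ) ^ 2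
        = (B : ℂ) * ((a : ℂ) * (ν₁ : ℂ) ^ 2 + (ε₀ : ℂ) * (ν₂ : ℂ) ^ 2) := by
      exact_mod_cast congrArg (fun r : ℝ => (r : ℂ)) r1
    have c2 : (ν₀ : ℂ) + 2 * (a : ℂ) * (θ₁ : ℂ) * (ν₁ : ℂ)
        + 2 * (ε₀ : ℂ) * (θ₂ : ℂ) * (ν₂ : ℂ) = 0 := by
      exact_mod_cast congrArg (fun r : ℝ => (r : ℂ)) r2
    have c3 : (b : ℂ) - (m : ℂ) * (w : ℂ)
        - (w : ℂ) * (K : ℂ) * ((m : ℂ) * (ν₀ : ℂ) + ((m : ℂ) * (c : ℂ) - (d : ℂ)) * (ν₂ : ℂ))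
        = 2 * (A : ℂ) * ((a : ℂ) * (ν₁ : ℂ) ^ 2 + (ε₀ : ℂ) * (ν₂ : ℂ) ^ 2) := by
      exact_mod_cast congrArg (fun r : ℝ => (r : ℂ)) r3
    push_cast
    linear_combination
      (-(Complex.exp (Complex.I * ((θ₁ * x : ℂ) + (θ₂ * y : ℂ) + (θ₀ * t : ℂ))) *
          ((solG A B δ₀ (ν₁ * x + ν₂ * y + ν₀ * t) : ℝ) : ℂ))) * c1
      + (Complex.I * Complex.exp (Complex.I * ((θ₁ * x : ℂ) + (θ₂ * y : ℂ) + (θ₀ * t : ℂ))) *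
          ((solG1 A B δ₀ (ν₁ * x + ν₂ * y + ν₀ * t) : ℝ) : ℂ)) * c2
      + (-(Complex.exp (Complex.I * ((θ₁ * x : ℂ) + (θ₂ * y : ℂ) + (θ₀ * t : ℂ))) *
          ((solG A B δ₀ (ν₁ * x + ν₂ * y + ν₀ * t) : ℝ) : ℂ) ^ 3)) * c3
      + (Complex.exp (Complex.I * ((θ₁ * x : ℂ) + (θ₂ * y : ℂ) + (θ₀ * t : ℂ))) *
          ((solG A B δ₀ (ν₁ * x + ν₂ * y + ν₀ * t) : ℝ) : ℂ) *
          ((θ₀ : ℂ) + (a : ℂ) * (θ₁ : ℂ) ^ 2 + (ε₀ : ℂ) * (θ₂ : ℂ) ^ 2)) * Complex.I_sq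
  · -- equation E2
    intro x y t
    have base : ∀ v, HasDerivAt (fun v => K * solG A B δ₀ v ^ 2)
        (K * (2 * solG A B δ₀ v * solG1 A B δ₀ v)) v := fun v => by
      simpa [mul_assoc] using ((solG_deriv A B δ₀ v).pow 2).const_mul K
    have base2 : ∀ v, HasDerivAt (fun v => solG A B δ₀ v ^ 2)
        (2 * solG A B δ₀ v * solG1 A B δ₀ v) v := fun v => by
      refine ((solG_deriv A B δ₀ v).pow 2).congr_deriv ?_
      simp
    have hΦTfun : pdT Φ = fun x y t =>
        K * solG A B δ₀ (ν₁ * x + ν₂ * y + ν₀ * t) ^ 2 * ν₀ := by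
      funext x y t
      exact ((solH_deriv K A B δ₀ Φ₀ hAneg hBpos _).comp t (MT x y t)).deriv
    have hΦXfun : pdX Φ = fun x y t =>
        K * solG A B δ₀ (ν₁ * x + ν₂ * y + ν₀ * t) ^ 2 * ν₁ := by
      funext x y t
      exact ((solH_deriv K A B δ₀ Φ₀ hAneg hBpos _).comp x (MX x y t)).deriv
    have hΦYfun : pdY Φ = fun x y t =>
        K * solG A B δ₀ (ν₁ * x + ν₂ * y + ν₀ * t) ^ 2 * ν₂ := by
      funext x y t
      exact ((solH_deriv K A B δ₀ Φ₀ hAneg hBpos _).comp y (MY x y t)).deriv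
    have hXX : pdX (fun x y t =>
        K * solG A B δ₀ (ν₁ * x + ν₂ * y + ν₀ * t) ^ 2 * ν₁) x y t
        = K * (2 * solG A B δ₀ (ν₁ * x + ν₂ * y + ν₀ * t)
            * solG1 A B δ₀ (ν₁ * x + ν₂ * y + ν₀ * t)) * ν₁ * ν₁ :=
      (((base _).comp x (MX x y t)).mul_const ν₁).deriv
    have hYY : pdY (fun x y t =>
        K * solG A B δ₀ (ν₁ * x + ν₂ * y + ν₀ * t) ^ 2 * ν₂) x y t
        = K * (2 * solG A B δ₀ (ν₁ * x + ν₂ * y + ν₀ * t)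
            * solG1 A B δ₀ (ν₁ * x + ν₂ * y + ν₀ * t)) * ν₂ * ν₂ :=
      (((base _).comp y (MY x y t)).mul_const ν₂).deriv
    have hTT : pdT (fun x y t =>
        K * solG A B δ₀ (ν₁ * x + ν₂ * y + ν₀ * t) ^ 2 * ν₀) x y t
        = K * (2 * solG A B δ₀ (ν₁ * x + ν₂ * y + ν₀ * t)
            * solG1 A B δ₀ (ν₁ * x + ν₂ * y + ν₀ * t)) * ν₀ * ν₀ :=
      (((base _).comp t (MT x y t)).mul_const ν₀).deriv
    have hYT : pdY (fun x y t =>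
        K * solG A B δ₀ (ν₁ * x + ν₂ * y + ν₀ * t) ^ 2 * ν₀) x y t
        = K * (2 * solG A B δ₀ (ν₁ * x + ν₂ * y + ν₀ * t)
            * solG1 A B δ₀ (ν₁ * x + ν₂ * y + ν₀ * t)) * ν₂ * ν₀ :=
      (((base _).comp y (MY x y t)).mul_const ν₀).deriv
    have hNT : pdT (fun x y t => Complex.normSq (Ψ x y t)) x y t
        = 2 * solG A B δ₀ (ν₁ * x + ν₂ * y + ν₀ * t)
            * solG1 A B δ₀ (ν₁ * x + ν₂ * y + ν₀ * t) * ν₀ := by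
      show deriv (fun s => Complex.normSq (Ψ x y s)) t = _
      rw [show (fun s => Complex.normSq (Ψ x y s))
          = fun s => solG A B δ₀ (ν₁ * x + ν₂ * y + ν₀ * s) ^ 2 from
        funext fun s => hns x y s]
      exact ((base2 _).comp t (MT x y t)).deriv
    have hNY : pdY (fun x y t => Complex.normSq (Ψ x y t)) x y t
        = 2 * solG A B δ₀ (ν₁ * x + ν₂ * y + ν₀ * t)
            * solG1 A B δ₀ (ν₁ * x + ν₂ * y + ν₀ * t) * ν₂ := by
      show deriv (fun s => Complex.normSq (Ψ x s t)) y = _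
      rw [show (fun s => Complex.normSq (Ψ x s t))
          = fun s => solG A B δ₀ (ν₁ * x + ν₂ * s + ν₀ * t) ^ 2 from
        funext fun s => hns x s t]
      exact ((base2 _).comp y (MY x y t)).deriv
    rw [hΦTfun, hΦXfun, hΦYfun, hXX, hYY, hTT, hYT, hNT, hNY]
    linear_combination (2 * solG A B δ₀ (ν₁ * x + ν₂ * y + ν₀ * t)
      * solG1 A B δ₀ (ν₁ * x + ν₂ * y + ν₀ * t)) * r4
end

section
/- Let ε₀ > 0, w > 0, m > 0 and c, d ∈ ℝ with mc² < 1 and mc ≠ d. Define a = ε₀/(mc² − 1), b = (c²m² − d² − 2m + 2mcd)w/(2(mc² − 1)), λ₁ = (mw − b)/(8a), λ₂ = (b − mw)/(8ε₀), λ₃ = 4ε₀/((mc − d)w), and Ω(x,y) = λ₁x² + λ₂y² + 1. Then λ₁ > 0 and λ₂ > 0 (so Ω(x,y) ≥ 1 for all (x,y)), and the time-independent pair ψ(x,y,t) = 1/Ω(x,y) (real-valued, viewed as a complex-valued function) and φ(x,y,t) = λ₃ (∂_yΩ)(x,y)/Ω(x,y) = 2λ₂λ₃ y/Ω(x,y)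 is a classical solution of the BR/ZR system with these parameters a, ε₀, b, w, m, c, d. -/
lemma hasDerivAt_OX (l₁ l₂ v : ℝ) (u : ℝ) :
    HasDerivAt (fun s : ℝ => l₁ * s ^ 2 + l₂ * v ^ 2 + 1) (2 * l₁ * u) u := by
  have h := (((hasDerivAt_pow 2 u).const_mul l₁).add_const (l₂ * v ^ 2)).add_const 1
  refine h.congr_deriv ?_
  push_cast; ring

lemma hasDerivAt_OY (l₁ l₂ u : ℝ) (v : ℝ) :
    HasDerivAt (fun s : ℝ => l₁ * u ^ 2 + l₂ * s ^ 2 + 1) (2 * l₂ * v) v := by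
  have h := ((((hasDerivAt_pow 2 v).const_mul l₂).const_add (l₁ * u ^ 2)).add_const 1)
  refine h.congr_deriv ?_
  push_cast; ring

lemma lump_aux (ε₀ a b w m c d l₁ l₂ l₃ : ℝ)
    (hl₁ : 0 < l₁) (hl₂ : 0 < l₂)
    (ea : a = -(ε₀ * l₂) / l₁)
    (ebb : b = w * m + 8 * ε₀ * l₂)
    (ecd : m * c - d = 4 * (l₁ * l₃))
    (eeps : ε₀ = l₁ * l₃ ^ 2 * w)
    (eD : 1 - m * c ^ 2 = l₁ / l₂) :
    IsBRZRSolution a ε₀ b w m c d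
      (fun x y _t => ((1 / (l₁ * x ^ 2 + l₂ * y ^ 2 + 1) : ℝ) : ℂ))
      (fun x y _t => 2 * l₂ * l₃ * y / (l₁ * x ^ 2 + l₂ * y ^ 2 + 1)) := by
  have hO : ∀ x y : ℝ, (0:ℝ) < l₁ * x ^ 2 + l₂ * y ^ 2 + 1 := by
    intro x y
    have h1 := mul_nonneg hl₁.le (sq_nonneg x)
    have h2 := mul_nonneg hl₂.le (sq_nonneg y)
    linarith
  -- first derivatives of ψ (as deriv equalities, for simp)
  have d1X : ∀ u v : ℝ, deriv (fun s => ((1 / (l₁ * s ^ 2 + l₂ * v ^ 2 + 1) : ℝ) : ℂ)) u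
      = ((-(2 * l₁ * u) / (l₁ * u ^ 2 + l₂ * v ^ 2 + 1) ^ 2 : ℝ) : ℂ) := by
    intro u v
    have hne := (hO u v).ne'
    have hd := ((hasDerivAt_const u (1:ℝ)).div (hasDerivAt_OX l₁ l₂ v u) hne).ofReal_comp
    exact hd.deriv.trans (by rw [Complex.ofReal_inj]; field_simp; ring)
  have d1Y : ∀ u v : ℝ, deriv (fun s => ((1 / (l₁ * u ^ 2 + l₂ * s ^ 2 + 1) : ℝ) : ℂ)) v
      = ((-(2 * l₂ * v) / (l₁ * u ^ 2 + l₂ * v ^ 2 + 1) ^ 2 : ℝ) : ℂ) := by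
    intro u v
    have hne := (hO u v).ne'
    have hd := ((hasDerivAt_const v (1:ℝ)).div (hasDerivAt_OY l₁ l₂ u v) hne).ofReal_comp
    exact hd.deriv.trans (by rw [Complex.ofReal_inj]; field_simp; ring)
  have d2X : ∀ u v : ℝ,
      deriv (fun s => ((-(2 * l₁ * s) / (l₁ * s ^ 2 + l₂ * v ^ 2 + 1) ^ 2 : ℝ) : ℂ)) u
      = (((8 * l₁ ^ 2 * u ^ 2 - 2 * l₁ * (l₁ * u ^ 2 + l₂ * v ^ 2 + 1))
          / (l₁ * u ^ 2 + l₂ * v ^ 2 + 1) ^ 3 : ℝ) : ℂ) := by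
    intro u v
    have hne := (hO u v).ne'
    have hnum : HasDerivAt (fun s : ℝ => -(2 * l₁ * s)) (-(2 * l₁)) u := by
      simpa using ((hasDerivAt_id u).const_mul (2 * l₁)).fun_neg
    have hd := (hnum.div ((hasDerivAt_OX l₁ l₂ v u).fun_pow 2) (pow_ne_zero 2 hne)).ofReal_comp
    refine hd.deriv.trans ?_
    rw [Complex.ofReal_inj]
    have h3 : (l₁ * u ^ 2 + l₂ * v ^ 2 + 1) ≠ 0 := hne
    field_simp
    ring
  have d2Y : ∀ u v : ℝ,
      deriv (fun s => ((-(2 * l₂ * s) / (l₁ * u ^ 2 + l₂ * s ^ 2 + 1) ^ 2 : ℝ) : ℂ)) v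
      = (((8 * l₂ ^ 2 * v ^ 2 - 2 * l₂ * (l₁ * u ^ 2 + l₂ * v ^ 2 + 1))
          / (l₁ * u ^ 2 + l₂ * v ^ 2 + 1) ^ 3 : ℝ) : ℂ) := by
    intro u v
    have hne := (hO u v).ne'
    have hnum : HasDerivAt (fun s : ℝ => -(2 * l₂ * s)) (-(2 * l₂)) v := by
      simpa using ((hasDerivAt_id v).const_mul (2 * l₂)).fun_neg
    have hd := (hnum.div ((hasDerivAt_OY l₁ l₂ u v).fun_pow 2) (pow_ne_zero 2 hne)).ofReal_comp
    refine hd.deriv.trans ?_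
    rw [Complex.ofReal_inj]
    field_simp
    ring
  -- derivatives of φ
  have dφX : ∀ u v : ℝ,
      deriv (fun s => 2 * l₂ * l₃ * v / (l₁ * s ^ 2 + l₂ * v ^ 2 + 1)) u
      = -(4 * l₁ * l₂ * l₃ * u * v) / (l₁ * u ^ 2 + l₂ * v ^ 2 + 1) ^ 2 := by
    intro u v
    have hne := (hO u v).ne'
    have hd := (hasDerivAt_const u (2 * l₂ * l₃ * v)).div (hasDerivAt_OX l₁ l₂ v u) hne
    refine hd.deriv.trans ?_
    field_simp
    ring
  have dφXX : ∀ u v : ℝ,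
      deriv (fun s => -(4 * l₁ * l₂ * l₃ * s * v) / (l₁ * s ^ 2 + l₂ * v ^ 2 + 1) ^ 2) u
      = (16 * l₁ ^ 2 * l₂ * l₃ * u ^ 2 * v
          - 4 * l₁ * l₂ * l₃ * v * (l₁ * u ^ 2 + l₂ * v ^ 2 + 1))
        / (l₁ * u ^ 2 + l₂ * v ^ 2 + 1) ^ 3 := by
    intro u v
    have hne := (hO u v).ne'
    have hnum : HasDerivAt (fun s : ℝ => -(4 * l₁ * l₂ * l₃ * s * v)) (-(4 * l₁ * l₂ * l₃ * v)) u := by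
      simpa using (((hasDerivAt_id u).const_mul (4 * l₁ * l₂ * l₃)).mul_const v).fun_neg
    have hd := hnum.div ((hasDerivAt_OX l₁ l₂ v u).fun_pow 2) (pow_ne_zero 2 hne)
    refine hd.deriv.trans ?_
    field_simp
    ring
  have dφY : ∀ u v : ℝ,
      deriv (fun s => 2 * l₂ * l₃ * s / (l₁ * u ^ 2 + l₂ * s ^ 2 + 1)) v
      = (2 * l₂ * l₃ * (l₁ * u ^ 2 + l₂ * v ^ 2 + 1) - 4 * l₂ ^ 2 * l₃ * v ^ 2)
        / (l₁ * u ^ 2 + l₂ * v ^ 2 + 1) ^ 2 := by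
    intro u v
    have hne := (hO u v).ne'
    have hnum : HasDerivAt (fun s : ℝ => 2 * l₂ * l₃ * s) (2 * l₂ * l₃) v := by
      simpa using (hasDerivAt_id v).const_mul (2 * l₂ * l₃)
    have hd := hnum.div (hasDerivAt_OY l₁ l₂ u v) hne
    refine hd.deriv.trans ?_
    field_simp
    ring
  have dφYY : ∀ u v : ℝ,
      deriv (fun s => (2 * l₂ * l₃ * (l₁ * u ^ 2 + l₂ * s ^ 2 + 1) - 4 * l₂ ^ 2 * l₃ * s ^ 2)
          / (l₁ * u ^ 2 + l₂ * s ^ 2 + 1) ^ 2) v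
      = (16 * l₂ ^ 3 * l₃ * v ^ 3
          - 12 * l₂ ^ 2 * l₃ * v * (l₁ * u ^ 2 + l₂ * v ^ 2 + 1))
        / (l₁ * u ^ 2 + l₂ * v ^ 2 + 1) ^ 3 := by
    intro u v
    have hne := (hO u v).ne'
    have hnum : HasDerivAt
        (fun s : ℝ => 2 * l₂ * l₃ * (l₁ * u ^ 2 + l₂ * s ^ 2 + 1) - 4 * l₂ ^ 2 * l₃ * s ^ 2)
        (2 * l₂ * l₃ * (2 * l₂ * v) - 4 * l₂ ^ 2 * l₃ * (2 * v)) v := by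
      have h1 := (hasDerivAt_OY l₁ l₂ u v).const_mul (2 * l₂ * l₃)
      have h2 := (hasDerivAt_pow 2 v).const_mul (4 * l₂ ^ 2 * l₃)
      have := h1.sub h2
      refine this.congr_deriv ?_
      push_cast; ring
    have hd := hnum.div ((hasDerivAt_OY l₁ l₂ u v).fun_pow 2) (pow_ne_zero 2 hne)
    refine hd.deriv.trans ?_
    field_simp
    ring
  -- derivative of |ψ|²
  have dNY : ∀ u v : ℝ,
      deriv (fun s => Complex.normSq ((1 / (l₁ * u ^ 2 + l₂ * s ^ 2 + 1) : ℝ) : ℂ)) v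
      = -(4 * l₂ * v) / (l₁ * u ^ 2 + l₂ * v ^ 2 + 1) ^ 3 := by
    intro u v
    have hne := (hO u v).ne'
    have h1 : HasDerivAt (fun s : ℝ => 1 / (l₁ * u ^ 2 + l₂ * s ^ 2 + 1))
        (-(2 * l₂ * v) / (l₁ * u ^ 2 + l₂ * v ^ 2 + 1) ^ 2) v := by
      have hd := (hasDerivAt_const v (1:ℝ)).div (hasDerivAt_OY l₁ l₂ u v) hne
      refine hd.congr_deriv ?_
      field_simp
      ring
    have hd := h1.mul h1
    have heq : (fun s => Complex.normSq ((1 / (l₁ * u ^ 2 + l₂ * s ^ 2 + 1) : ℝ) : ℂ))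
        = fun s => (1 / (l₁ * u ^ 2 + l₂ * s ^ 2 + 1)) * (1 / (l₁ * u ^ 2 + l₂ * s ^ 2 + 1)) := by
      funext s; rw [Complex.normSq_ofReal]
    rw [heq]
    refine hd.deriv.trans ?_
    field_simp
    ring
  refine ⟨?_, ?_, ?_, ?_⟩
  · -- smoothness of ψ
    have hOc : ContDiff ℝ 2 (fun p : ℝ × ℝ × ℝ => l₁ * p.1 ^ 2 + l₂ * p.2.1 ^ 2 + 1) := by
      fun_prop
    have h1 : ContDiff ℝ 2 (fun p : ℝ × ℝ × ℝ => 1 / (l₁ * p.1 ^ 2 + l₂ * p.2.1 ^ 2 + 1)) :=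
      contDiff_const.div hOc (fun p => (hO p.1 p.2.1).ne')
    exact Complex.ofRealCLM.contDiff.comp h1
  · -- smoothness of φ
    have hOc : ContDiff ℝ 2 (fun p : ℝ × ℝ × ℝ => l₁ * p.1 ^ 2 + l₂ * p.2.1 ^ 2 + 1) := by
      fun_prop
    exact ContDiff.div (by fun_prop) hOc (fun p => (hO p.1 p.2.1).ne')
  · -- equation (E1)
    intro x y t
    have hne := (hO x y).ne'
    simp only [pdX, pdY, pdT, d1X, d1Y, d2X, d2Y, dφY, deriv_const', Complex.normSq_ofReal,
      mul_zero, zero_add, add_zero, zero_mul]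
    rw [ea, ebb]
    push_cast
    have ecdC : (m:ℂ) * c - d = 4 * (l₁ * l₃) := by exact_mod_cast ecd
    have eepsC : (ε₀:ℂ) = l₁ * l₃ ^ 2 * w := by exact_mod_cast eeps
    have hneC : ((l₁:ℂ) * x ^ 2 + l₂ * y ^ 2 + 1) ≠ 0 := by exact_mod_cast hne
    have hl₁C : (l₁:ℂ) ≠ 0 := Complex.ofReal_ne_zero.mpr hl₁.ne'
    have hl₂C : (l₂:ℂ) ≠ 0 := Complex.ofReal_ne_zero.mpr hl₂.ne'
    rw [ecdC, eepsC]
    field_simp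
    ring
  · -- equation (E2)
    intro x y t
    have hne := (hO x y).ne'
    simp only [pdX, pdY, pdT, dφX, dφXX, dφY, dφYY, dNY, deriv_const', mul_zero, zero_add,
      add_zero, sub_zero, zero_mul]
    rw [ecd, eD]
    have hl₂' := hl₂.ne'
    field_simp
    ring

/-- a lump-type stationary solution of the BR/ZR system.
Here `l₁, l₂, l₃` play the roles of `λ₁, λ₂, λ₃` and `Ω(x,y) = l₁x² + l₂y² + 1`. -/
theorem brzr_lump_solution
    (ε₀ w m c d a b l₁ l₂ l₃ : ℝ)
    (hε₀ : 0 < ε₀) (hw : 0 < w) (hm : 0 < m)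
    (hc : m * c ^ 2 < 1) (hcd : m * c ≠ d)
    (ha : a = ε₀ / (m * c ^ 2 - 1))
    (hb : b = (c ^ 2 * m ^ 2 - d ^ 2 - 2 * m + 2 * m * c * d) * w / (2 * (m * c ^ 2 - 1)))
    (hl₁ : l₁ = (m * w - b) / (8 * a))
    (hl₂ : l₂ = (b - m * w) / (8 * ε₀))
    (hl₃ : l₃ = 4 * ε₀ / ((m * c - d) * w)) :
    0 < l₁ ∧ 0 < l₂ ∧
    (∀ x y : ℝ, 1 ≤ l₁ * x ^ 2 + l₂ * y ^ 2 + 1) ∧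
    IsBRZRSolution a ε₀ b w m c d
      (fun x y _t => ((1 / (l₁ * x ^ 2 + l₂ * y ^ 2 + 1) : ℝ) : ℂ))
      (fun x y _t => 2 * l₂ * l₃ * y / (l₁ * x ^ 2 + l₂ * y ^ 2 + 1)) := by
  have he : m * c - d ≠ 0 := sub_ne_zero.mpr hcd
  have he2 : (0:ℝ) < (m * c - d) ^ 2 :=
    lt_of_le_of_ne (sq_nonneg _) (Ne.symm (pow_ne_zero 2 he))
  have hk : (0:ℝ) < 1 - m * c ^ 2 := by linarith
  have hk' : m * c ^ 2 - 1 ≠ 0 := (show m * c ^ 2 - 1 < 0 by linarith).ne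
  have hε₀' := hε₀.ne'
  have hw' := hw.ne'
  have el₂ : l₂ = w * (m * c - d) ^ 2 / (16 * ε₀ * (1 - m * c ^ 2)) := by
    rw [hl₂, hb, show m * c ^ 2 - 1 = -(1 - m * c ^ 2) by ring]
    field_simp [hk.ne', show (1:ℝ) - c ^ 2 * m ≠ 0 by rw [mul_comm]; exact hk.ne']
    ring
  have el₁ : l₁ = w * (m * c - d) ^ 2 / (16 * ε₀) := by
    rw [hl₁, hb, ha]
    field_simp
    ring
  have hl₁pos : 0 < l₁ := by
    rw [el₁]; exact div_pos (mul_pos hw he2) (by linarith)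
  have hl₂pos : 0 < l₂ := by
    rw [el₂]; exact div_pos (mul_pos hw he2) (mul_pos (by linarith) hk)
  have ecd : m * c - d = 4 * (l₁ * l₃) := by
    rw [el₁, hl₃]; field_simp; ring
  have eeps : ε₀ = l₁ * l₃ ^ 2 * w := by
    rw [el₁, hl₃]; field_simp; ring
  have eD : 1 - m * c ^ 2 = l₁ / l₂ := by
    rw [el₁, el₂]; field_simp
  have ebb : b = w * m + 8 * ε₀ * l₂ := by
    rw [hb, el₂, show m * c ^ 2 - 1 = -(1 - m * c ^ 2) by ring]; field_simp [hk.ne', show (1:ℝ) - c ^ 2 * m ≠ 0 by rw [mul_comm]; exact hk.ne']; ring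
  have ea : a = -(ε₀ * l₂) / l₁ := by
    rw [ha, el₁, el₂]; field_simp; ring
  exact ⟨hl₁pos, hl₂pos,
    fun x y => by nlinarith [mul_nonneg hl₁pos.le (sq_nonneg x), mul_nonneg hl₂pos.le (sq_nonneg y)],
    lump_aux ε₀ a b w m c d l₁ l₂ l₃ hl₁pos hl₂pos ea ebb ecd eeps eD⟩
end

section
/- Let A > 0, B > 0, K, δ₀, Φ₀ ∈ ℝ and ε ∈ {−1, 1}. On the domain D = {ν ∈ ℝ : ν + δ₀ ≠ 0}, define Ψ(ν) = −ε √(B/A) / sinh(√B(ν + δ₀)) and Φ(ν) = −(K√B/A) cosh(√B(ν + δ₀))/sinh(√B(ν + δ₀)) + Φ₀. Then for every ν ∈ D one has Ψ'(ν)² = A Ψ(ν)⁴ + B Ψ(ν)² and Φ'(ν) = K Ψ(ν)². -/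
/-- the csch/coth solution of the first integral `Ψ'² = AΨ⁴ + BΨ²` (case
`C = 0`) together with `Φ' = KΨ²`, in the case `A > 0`, `B > 0`, on the domain
`ν + δ₀ ≠ 0`. -/
theorem brzr_csch_solution (A B K δ₀ Φ₀ ε : ℝ)
    (hA : 0 < A) (hB : 0 < B) (hε : ε ∈ ({-1, 1} : Set ℝ)) :
    ∀ ν : ℝ, ν + δ₀ ≠ 0 →
      (deriv (fun s => -ε * Real.sqrt (B / A) / Real.sinh (Real.sqrt B * (s + δ₀))) ν) ^ 2
          = A * (-ε * Real.sqrt (B / A) / Real.sinh (Real.sqrt B * (ν + δ₀))) ^ 4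
            + B * (-ε * Real.sqrt (B / A) / Real.sinh (Real.sqrt B * (ν + δ₀))) ^ 2 ∧
      deriv (fun s => -(K * Real.sqrt B / A) *
            (Real.cosh (Real.sqrt B * (s + δ₀)) / Real.sinh (Real.sqrt B * (s + δ₀))) + Φ₀) ν
          = K * (-ε * Real.sqrt (B / A) / Real.sinh (Real.sqrt B * (ν + δ₀))) ^ 2 := by
  intro ν hν
  have hsB : (0:ℝ) < Real.sqrt B := Real.sqrt_pos.2 hB
  have harg : Real.sqrt B * (ν + δ₀) ≠ 0 := mul_ne_zero hsB.ne' hν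
  have hs : Real.sinh (Real.sqrt B * (ν + δ₀)) ≠ 0 := Real.sinh_ne_zero.2 harg
  set u := Real.sqrt B * (ν + δ₀) with hu
  -- inner derivative
  have hinner : HasDerivAt (fun s : ℝ => Real.sqrt B * (s + δ₀)) (Real.sqrt B) ν := by
    simpa using ((hasDerivAt_id ν).add_const δ₀).const_mul (Real.sqrt B)
  have hsinh : HasDerivAt (fun s : ℝ => Real.sinh (Real.sqrt B * (s + δ₀)))
      (Real.cosh u * Real.sqrt B) ν := by exact (Real.hasDerivAt_sinh _).comp ν hinner
  have hcosh : HasDerivAt (fun s : ℝ => Real.cosh (Real.sqrt B * (s + δ₀)))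
      (Real.sinh u * Real.sqrt B) ν := by exact (Real.hasDerivAt_cosh _).comp ν hinner
  have hΨ : HasDerivAt (fun s : ℝ => -ε * Real.sqrt (B / A) / Real.sinh (Real.sqrt B * (s + δ₀)))
      ((0 * Real.sinh u - (-ε * Real.sqrt (B / A)) * (Real.cosh u * Real.sqrt B))
        / Real.sinh u ^ 2) ν :=
    (hasDerivAt_const ν (-ε * Real.sqrt (B / A))).div hsinh hs
  have hΦ : HasDerivAt (fun s : ℝ => -(K * Real.sqrt B / A) *
      (Real.cosh (Real.sqrt B * (s + δ₀)) / Real.sinh (Real.sqrt B * (s + δ₀))) + Φ₀)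
      (-(K * Real.sqrt B / A) * ((Real.sinh u * Real.sqrt B * Real.sinh u -
        Real.cosh u * (Real.cosh u * Real.sqrt B)) / Real.sinh u ^ 2)) ν :=
    (((hcosh.div hsinh hs).const_mul _).add_const Φ₀)
  have hε2 : ε ^ 2 = 1 := by
    rcases hε with h | h <;> simp_all
  have hsq : Real.sqrt (B / A) ^ 2 = B / A := Real.sq_sqrt (by positivity)
  have hBsq : Real.sqrt B ^ 2 = B := Real.sq_sqrt hB.le
  have hcsq : Real.cosh u ^ 2 = Real.sinh u ^ 2 + 1 := Real.cosh_sq u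
  have hAne : A ≠ 0 := hA.ne'
  have hc2 : A * (-ε * Real.sqrt (B / A)) ^ 2 = B := by
    rw [mul_pow, neg_sq, hε2, hsq, one_mul]
    field_simp
  constructor
  · rw [hΨ.deriv]
    set c := -ε * Real.sqrt (B / A) with hc
    set s := Real.sinh u with hsdef
    set ch := Real.cosh u with hchdef
    clear_value c s ch
    field_simp
    linear_combination c^2*ch^2*hBsq - c^2*hc2 + B*c^2*hcsq
  · rw [hΦ.deriv]
    set c := -ε * Real.sqrt (B / A) with hc
    set s := Real.sinh u with hsdef
    set ch := Real.cosh u with hchdef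
    clear_value c s ch
    field_simp
    linear_combination K*(ch^2-s^2)*hBsq - K*hc2 + K*B*hcsq
end

section
/- Let A > 0, B < 0, K, δ₀, Φ₀ ∈ ℝ. On the domain D = {ν ∈ ℝ : cos(√(−B)(ν + δ₀)) ≠ 0}, define Ψ(ν) = √(−B/A) / cos(√(−B)(ν + δ₀)) and Φ(ν) = (K√(−B)/A) tan(√(−B)(ν + δ₀)) + Φ₀. Then for every ν ∈ D one has Ψ'(ν)² = A Ψ(ν)⁴ + B Ψ(ν)² and Φ'(ν) = K Ψ(ν)². -/
/-! With `c = √(−B)` and `a = √(−B/A)` one has `A a² = c² = −B`. Differentiating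
`Ψ = a sec θ`, `θ = c(ν + δ₀)`, gives `Ψ' = a c sin θ / cos² θ`, and `sin² θ = 1 − cos² θ` turns
`Ψ'²` into `a²c² / cos⁴ θ − a²c² / cos² θ = AΨ⁴ + BΨ²`. Likewise `Φ' = (K c² / A) sec² θ = K a² sec² θ
= KΨ²`. -/

open Real

section TravellingWave

variable (a c δ ν : ℝ)

theorem hasDerivAt_mul_add : HasDerivAt (fun s => c * (s + δ)) c ν := by
  simpa using ((hasDerivAt_id ν).add_const δ).const_mul c

theorem hasDerivAt_div_cos_mul_add (hcos : cos (c * (ν + δ)) ≠ 0) :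
    HasDerivAt (fun s => a / cos (c * (s + δ)))
      (a * c * sin (c * (ν + δ)) / cos (c * (ν + δ)) ^ 2) ν := by
  refine ((hasDerivAt_const ν a).fun_div (hasDerivAt_mul_add c δ ν).cos hcos).congr_deriv ?_
  ring

theorem hasDerivAt_tan_mul_add (hcos : cos (c * (ν + δ)) ≠ 0) :
    HasDerivAt (fun s => tan (c * (s + δ))) (c / cos (c * (ν + δ)) ^ 2) ν := by
  refine ((hasDerivAt_tan hcos).comp ν (hasDerivAt_mul_add c δ ν)).congr_deriv ?_
  ring

theorem deriv_div_cos_mul_add_sq {A : ℝ} (hac : A * a ^ 2 = c ^ 2)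
    (hcos : cos (c * (ν + δ)) ≠ 0) :
    deriv (fun s => a / cos (c * (s + δ))) ν ^ 2
      = A * (a / cos (c * (ν + δ))) ^ 4 - c ^ 2 * (a / cos (c * (ν + δ))) ^ 2 := by
  rw [(hasDerivAt_div_cos_mul_add a c δ ν hcos).deriv]
  have hsin : sin (c * (ν + δ)) ^ 2 = 1 - cos (c * (ν + δ)) ^ 2 := sin_sq _
  field_simp
  rw [hsin]
  linear_combination (-a ^ 2) * hac

theorem deriv_const_mul_tan_mul_add_add (K Φ₀ : ℝ) {A : ℝ} (hA : A ≠ 0)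
    (hac : A * a ^ 2 = c ^ 2) (hcos : cos (c * (ν + δ)) ≠ 0) :
    deriv (fun s => K * c / A * tan (c * (s + δ)) + Φ₀) ν
      = K * (a / cos (c * (ν + δ))) ^ 2 := by
  rw [(((hasDerivAt_tan_mul_add c δ ν hcos).const_mul (K * c / A)).add_const Φ₀).deriv]
  field_simp
  linear_combination (-K) * hac

end TravellingWave

/-- the sec/tan solution of the first integral `Ψ'² = AΨ⁴ + BΨ²` (case
`C = 0`) together with `Φ' = KΨ²`, in the case `A > 0`, `B < 0`, on the domain where
`cos(√(−B)(ν + δ₀)) ≠ 0`. -/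
theorem brzr_sec_solution (A B K δ₀ Φ₀ : ℝ)
    (hA : 0 < A) (hB : B < 0) :
    ∀ ν : ℝ, Real.cos (Real.sqrt (-B) * (ν + δ₀)) ≠ 0 →
      (deriv (fun s => Real.sqrt (-B / A) / Real.cos (Real.sqrt (-B) * (s + δ₀))) ν) ^ 2
          = A * (Real.sqrt (-B / A) / Real.cos (Real.sqrt (-B) * (ν + δ₀))) ^ 4
            + B * (Real.sqrt (-B / A) / Real.cos (Real.sqrt (-B) * (ν + δ₀))) ^ 2 ∧
      deriv (fun s => (K * Real.sqrt (-B) / A) * Real.tan (Real.sqrt (-B) * (s + δ₀)) + Φ₀) ν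
          = K * (Real.sqrt (-B / A) / Real.cos (Real.sqrt (-B) * (ν + δ₀))) ^ 2 := by
  intro ν hcos
  have hc : √(-B) ^ 2 = -B := sq_sqrt (by linarith)
  have hac : A * √(-B / A) ^ 2 = √(-B) ^ 2 := by
    rw [sq_sqrt (div_nonneg (by linarith) hA.le), hc]
    field_simp
  refine ⟨?_, deriv_const_mul_tan_mul_add_add _ _ _ _ K Φ₀ hA.ne' hac hcos⟩
  rw [deriv_div_cos_mul_add_sq _ _ _ _ hac hcos, hc]
  ring
end

section
/- Let A > 0, B > 0, K, δ₀, Φ₀ ∈ ℝ, ε ∈ {−1, 1}, and set C = B²/(4A) (so that B² − 4AC = 0). On the domain D = {ν ∈ ℝ : cos(√(B/2)(ν + δ₀)) ≠ 0}, define Ψ(ν) = ε √(B/(2A)) tan(√(B/2)(ν + δ₀)) and Φ(ν) = (K√B/(A√2)) tan(√(B/2)(ν + δ₀)) − (BK/(2A)) ν + Φ₀. Then for every ν ∈ D one has Ψ'(ν)² = A Ψ(ν)⁴ + B Ψ(ν)² + C and Φ'(ν) = K Ψ(ν)². -/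
/-- the tan solution in the degenerate case `B² − 4AC = 0` with
`A > 0`, `B > 0`, `C = B²/(4A)`, on the domain where `cos(√(B/2)(ν + δ₀)) ≠ 0`. -/
theorem brzr_tan_solution (A B K δ₀ Φ₀ ε C : ℝ)
    (hA : 0 < A) (hB : 0 < B) (hε : ε ∈ ({-1, 1} : Set ℝ))
    (hC : C = B ^ 2 / (4 * A)) :
    B ^ 2 - 4 * A * C = 0 ∧
    ∀ ν : ℝ, Real.cos (Real.sqrt (B / 2) * (ν + δ₀)) ≠ 0 →
      (deriv (fun s => ε * Real.sqrt (B / (2 * A)) * Real.tan (Real.sqrt (B / 2) * (s + δ₀))) ν) ^ 2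
          = A * (ε * Real.sqrt (B / (2 * A)) * Real.tan (Real.sqrt (B / 2) * (ν + δ₀))) ^ 4
            + B * (ε * Real.sqrt (B / (2 * A)) * Real.tan (Real.sqrt (B / 2) * (ν + δ₀))) ^ 2 + C ∧
      deriv (fun s => (K * Real.sqrt B / (A * Real.sqrt 2)) * Real.tan (Real.sqrt (B / 2) * (s + δ₀))
            - (B * K / (2 * A)) * s + Φ₀) ν
          = K * (ε * Real.sqrt (B / (2 * A)) * Real.tan (Real.sqrt (B / 2) * (ν + δ₀))) ^ 2 := by
  have hε2 : ε ^ 2 = 1 := by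
    rcases hε with h | h <;> simp_all
  refine ⟨by rw [hC]; field_simp; ring, fun ν hcos => ?_⟩
  set a := Real.sqrt (B / 2) with ha
  set b := Real.sqrt (B / (2 * A)) with hbdef
  have ha2 : a ^ 2 = B / 2 := Real.sq_sqrt (by positivity)
  set t := Real.tan (a * (ν + δ₀)) with ht
  set c := Real.cos (a * (ν + δ₀)) with hc'
  have hs := Real.sin_sq_add_cos_sq (a * (ν + δ₀))
  have hc2 : t ^ 2 + 1 = 1 / c ^ 2 := by
    rw [ht, Real.tan_eq_sin_div_cos]
    field_simp
    have hcos' : Real.cos (a * (ν + δ₀)) ≠ 0 := hcos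
    rw [hc']
    field_simp
    linarith
  have hinner : HasDerivAt (fun s : ℝ => a * (s + δ₀)) a ν := by
    simpa using ((hasDerivAt_id ν).add_const δ₀).const_mul a
  have htan : HasDerivAt (fun s : ℝ => Real.tan (a * (s + δ₀))) (1 / c ^ 2 * a) ν :=
    by have h := Real.hasDerivAt_tan (x := a * (ν + δ₀)) hcos; exact h.comp ν hinner
  have hb2A : b ^ 2 = B / (2 * A) := Real.sq_sqrt (by positivity)
  have hs2 : Real.sqrt 2 ^ 2 = 2 := Real.sq_sqrt (by norm_num)
  have hs2ne : Real.sqrt 2 ≠ 0 := by positivity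
  have hAne : A ≠ 0 := hA.ne'
  have hsB2 : Real.sqrt B = a * Real.sqrt 2 := by
    rw [ha, ← Real.sqrt_mul (by positivity) 2]
    norm_num
  constructor
  · have h1 : HasDerivAt (fun s => ε * b * Real.tan (a * (s + δ₀)))
        (ε * b * (1 / c ^ 2 * a)) ν := htan.const_mul _
    rw [h1.deriv, ← hc2, hC,
      show (ε * b * ((t ^ 2 + 1) * a)) ^ 2 = ε ^ 2 * b ^ 2 * a ^ 2 * (t ^ 2 + 1) ^ 2 from by ring,
      show A * (ε * b * t) ^ 4 + B * (ε * b * t) ^ 2 + B ^ 2 / (4 * A)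
          = A * (ε ^ 2) ^ 2 * (b ^ 2) ^ 2 * t ^ 4 + B * ε ^ 2 * b ^ 2 * t ^ 2 + B ^ 2 / (4 * A)
        from by ring,
      hε2, hb2A, ha2]
    field_simp
    ring
  · have h2 : HasDerivAt (fun s => (K * Real.sqrt B / (A * Real.sqrt 2)) * Real.tan (a * (s + δ₀))
        - (B * K / (2 * A)) * s + Φ₀)
        ((K * Real.sqrt B / (A * Real.sqrt 2)) * (1 / c ^ 2 * a) - B * K / (2 * A)) ν := by
      have := ((htan.const_mul (K * Real.sqrt B / (A * Real.sqrt 2))).sub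
        ((hasDerivAt_id ν).const_mul (B * K / (2 * A)))).add_const Φ₀
      simpa using this
    rw [h2.deriv, ← hc2, hsB2,
      show K * (a * Real.sqrt 2) / (A * Real.sqrt 2) * ((t ^ 2 + 1) * a)
          = K * a ^ 2 / A * (t ^ 2 + 1) * (Real.sqrt 2 / Real.sqrt 2) from by ring,
      div_self hs2ne, mul_one, ha2,
      show K * (ε * b * t) ^ 2 = K * ε ^ 2 * b ^ 2 * t ^ 2 from by ring, hε2, hb2A]
    field_simp
    ring
end

section
/- Let A > 0, B < 0, K, δ₀, Φ₀ ∈ ℝ, ε ∈ {−1, 1}, and set C = B²/(4A) (so that B² − 4AC = 0). Define Ψ(ν) = −ε √(−B/(2A)) tanh(√(−B/2)(ν + δ₀)) and Φ(ν) = −(K√(−B)/(A√2)) tanh(√(−B/2)(ν + δ₀)) − (BK/(2A)) ν + Φ₀. Then for every ν ∈ ℝ one has Ψ'(ν)² = A Ψ(ν)⁴ + B Ψ(ν)² + C and Φ'(ν) = K Ψ(ν)². -/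
lemma tanh_hasDerivAt (x : ℝ) :
    HasDerivAt Real.tanh (1 - Real.tanh x ^ 2) x := by
  have hc : Real.cosh x ≠ 0 := (Real.cosh_pos x).ne'
  have h := (Real.hasDerivAt_sinh x).div (Real.hasDerivAt_cosh x) hc
  have heq : (fun y => Real.sinh y / Real.cosh y) = Real.tanh := by
    funext y; rw [Real.tanh_eq_sinh_div_cosh]
  rw [show (Real.sinh / Real.cosh) = Real.tanh from heq] at h
  refine h.congr_deriv ?_
  rw [Real.tanh_eq_sinh_div_cosh]
  have h2 := Real.cosh_sq_sub_sinh_sq x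
  field_simp

/-- the tanh solution in the degenerate case `B² − 4AC = 0` with
`A > 0`, `B < 0`, `C = B²/(4A)`. -/
theorem brzr_tanh_solution (A B K δ₀ Φ₀ ε C : ℝ)
    (hA : 0 < A) (hB : B < 0) (hε : ε ∈ ({-1, 1} : Set ℝ))
    (hC : C = B ^ 2 / (4 * A)) :
    B ^ 2 - 4 * A * C = 0 ∧
    ∀ ν : ℝ,
      (deriv (fun s => -ε * Real.sqrt (-B / (2 * A)) *
            Real.tanh (Real.sqrt (-B / 2) * (s + δ₀))) ν) ^ 2
          = A * (-ε * Real.sqrt (-B / (2 * A)) * Real.tanh (Real.sqrt (-B / 2) * (ν + δ₀))) ^ 4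
            + B * (-ε * Real.sqrt (-B / (2 * A)) * Real.tanh (Real.sqrt (-B / 2) * (ν + δ₀))) ^ 2
            + C ∧
      deriv (fun s => -(K * Real.sqrt (-B) / (A * Real.sqrt 2)) *
            Real.tanh (Real.sqrt (-B / 2) * (s + δ₀)) - (B * K / (2 * A)) * s + Φ₀) ν
          = K * (-ε * Real.sqrt (-B / (2 * A)) * Real.tanh (Real.sqrt (-B / 2) * (ν + δ₀))) ^ 2 := by
  have hε2 : ε ^ 2 = 1 := by
    rcases hε with h | h <;> subst h <;> norm_num
  constructor
  · rw [hC]; field_simp; ring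
  intro ν
  set c := Real.sqrt (-B / 2) with hc
  set a := Real.sqrt (-B / (2 * A)) with ha
  have hc2 : c ^ 2 = -B / 2 := Real.sq_sqrt (by linarith)
  have ha2 : a ^ 2 = -B / (2 * A) :=
    Real.sq_sqrt (div_nonneg (by linarith) (by linarith))
  have hcs : c = Real.sqrt (-B) / Real.sqrt 2 := by
    rw [hc, Real.sqrt_div (by linarith : (0:ℝ) ≤ -B)]
  have hS : Real.sqrt (-B) * Real.sqrt (-B) = -B := Real.mul_self_sqrt (by linarith)
  have hR : Real.sqrt 2 * Real.sqrt 2 = 2 := Real.mul_self_sqrt (by norm_num)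
  set t := Real.tanh (c * (ν + δ₀)) with ht
  have hinner : HasDerivAt (fun s : ℝ => c * (s + δ₀)) c ν := by
    simpa using ((hasDerivAt_id ν).add_const δ₀).const_mul c
  have htanh : HasDerivAt (fun s : ℝ => Real.tanh (c * (s + δ₀))) ((1 - t ^ 2) * c) ν :=
    by have := (tanh_hasDerivAt (c * (ν + δ₀))).comp ν hinner; exact this
  have hΨ : deriv (fun s => -ε * a * Real.tanh (c * (s + δ₀))) ν
      = -ε * a * ((1 - t ^ 2) * c) := (htanh.const_mul _).deriv
  have hΦ : deriv (fun s => -(K * Real.sqrt (-B) / (A * Real.sqrt 2)) *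
        Real.tanh (c * (s + δ₀)) - (B * K / (2 * A)) * s + Φ₀) ν
      = -(K * Real.sqrt (-B) / (A * Real.sqrt 2)) * ((1 - t ^ 2) * c)
        - B * K / (2 * A) * 1 :=
    (((htanh.const_mul _).sub ((hasDerivAt_id ν).const_mul _)).add_const Φ₀).deriv
  have hAne : A ≠ 0 := hA.ne'
  refine ⟨?_, ?_⟩
  · rw [hΨ, hC]
    have hac : a ^ 2 * c ^ 2 = B ^ 2 / (4 * A) := by
      rw [ha2, hc2, div_mul_div_comm]; congr 1 <;> ring
    have ha4 : a ^ 4 = B ^ 2 / (4 * A ^ 2) := by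
      rw [show a ^ 4 = (a ^ 2) ^ 2 by ring, ha2, div_pow]; congr 1 <;> ring
    have L : (-ε * a * ((1 - t ^ 2) * c)) ^ 2 = B ^ 2 / (4 * A) * (1 - t ^ 2) ^ 2 := by
      rw [show (-ε * a * ((1 - t ^ 2) * c)) ^ 2
          = ε ^ 2 * (a ^ 2 * c ^ 2) * (1 - t ^ 2) ^ 2 by ring, hε2, hac]; ring
    have R : A * (-ε * a * t) ^ 4 + B * (-ε * a * t) ^ 2 + B ^ 2 / (4 * A)
        = B ^ 2 / (4 * A) * (1 - t ^ 2) ^ 2 := by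
      rw [show A * (-ε * a * t) ^ 4 = A * (ε ^ 2) ^ 2 * a ^ 4 * t ^ 4 by ring,
        show B * (-ε * a * t) ^ 2 = B * ε ^ 2 * (a ^ 2 * t ^ 2) by ring, hε2, ha4, ha2]
      field_simp
      ring
    rw [L, R]
  · rw [hΦ]
    have hcoef : -(K * Real.sqrt (-B) / (A * Real.sqrt 2)) * c = K * B / (2 * A) := by
      rw [hcs, show -(K * Real.sqrt (-B) / (A * Real.sqrt 2)) * (Real.sqrt (-B) / Real.sqrt 2)
        = -(K * (Real.sqrt (-B) * Real.sqrt (-B))) / (A * (Real.sqrt 2 * Real.sqrt 2)) by ring,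
        hS, hR]
      ring
    rw [show -(K * Real.sqrt (-B) / (A * Real.sqrt 2)) * ((1 - t ^ 2) * c)
        = -(K * Real.sqrt (-B) / (A * Real.sqrt 2)) * c * (1 - t ^ 2) by ring, hcoef,
      show K * (-ε * a * t) ^ 2 = K * (ε ^ 2 * (a ^ 2 * t ^ 2)) by ring, hε2, ha2]
    field_simp
    ring
end

section
/- Let a, ε₀, b, c, d ∈ ℝ and m, w > 0, and let (ψ, φ) be a classical solution of the BR/ZR system. Then for any real constants q₀, q₁, q₂, setting χ(t) = q₂t² + q₁t + q₀, the pair ψ̃(x,y,t) = e^{iχ(t)} ψ(x,y,t), φ̃(x,y,t) = φ(x,y,t) + χ(t)/(mw) + (q₂/w) x² is also a classical solution of the BR/ZR system. (This is the finite transformation generated by the symmetries 𝒳₄, 𝒳₅, 𝒳₆ of the system.) -/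
section GaugeHelpers
open Complex
variable {E : Type*} [NormedAddCommGroup E] [NormedSpace ℝ E]

lemma hasDerivAt_sliceX (G : ℝ×ℝ×ℝ → E) (x y t : ℝ) (hG : DifferentiableAt ℝ G (x,y,t)) :
    HasDerivAt (fun s => G (s,y,t)) (fderiv ℝ G (x,y,t) (1,0,0)) x :=
  hG.hasFDerivAt.comp_hasDerivAt x ((hasDerivAt_id x).prodMk (hasDerivAt_const x (y,t)))

lemma hasDerivAt_sliceY (G : ℝ×ℝ×ℝ → E) (x y t : ℝ) (hG : DifferentiableAt ℝ G (x,y,t)) :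
    HasDerivAt (fun s => G (x,s,t)) (fderiv ℝ G (x,y,t) (0,1,0)) y :=
  hG.hasFDerivAt.comp_hasDerivAt y
    ((hasDerivAt_const y x).prodMk ((hasDerivAt_id y).prodMk (hasDerivAt_const y t)))

lemma hasDerivAt_sliceT (G : ℝ×ℝ×ℝ → E) (x y t : ℝ) (hG : DifferentiableAt ℝ G (x,y,t)) :
    HasDerivAt (fun s => G (x,y,s)) (fderiv ℝ G (x,y,t) (0,0,1)) t :=
  hG.hasFDerivAt.comp_hasDerivAt t
    ((hasDerivAt_const t x).prodMk ((hasDerivAt_const t y).prodMk (hasDerivAt_id t)))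

lemma fderiv_apply_contDiff {G : ℝ×ℝ×ℝ → E} (hG : ContDiff ℝ 2 G) (v : ℝ×ℝ×ℝ) :
    ContDiff ℝ 1 (fun p => fderiv ℝ G p v) :=
  (hG.fderiv_right (le_refl _)).clm_apply contDiff_const

lemma pd_hasDerivAt_X (f : ℝ→ℝ→ℝ→E)
    (hf : Differentiable ℝ (fun p : ℝ×ℝ×ℝ => f p.1 p.2.1 p.2.2)) (x y t : ℝ) :
    HasDerivAt (fun s => f s y t) (pdX f x y t) x :=
  (hasDerivAt_sliceX (fun p : ℝ×ℝ×ℝ => f p.1 p.2.1 p.2.2) x y t (hf _)).differentiableAt.hasDerivAt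

lemma pd_hasDerivAt_Y (f : ℝ→ℝ→ℝ→E)
    (hf : Differentiable ℝ (fun p : ℝ×ℝ×ℝ => f p.1 p.2.1 p.2.2)) (x y t : ℝ) :
    HasDerivAt (fun s => f x s t) (pdY f x y t) y :=
  (hasDerivAt_sliceY (fun p : ℝ×ℝ×ℝ => f p.1 p.2.1 p.2.2) x y t (hf _)).differentiableAt.hasDerivAt

lemma pd_hasDerivAt_T (f : ℝ→ℝ→ℝ→E)
    (hf : Differentiable ℝ (fun p : ℝ×ℝ×ℝ => f p.1 p.2.1 p.2.2)) (x y t : ℝ) :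
    HasDerivAt (fun s => f x y s) (pdT f x y t) t :=
  (hasDerivAt_sliceT (fun p : ℝ×ℝ×ℝ => f p.1 p.2.1 p.2.2) x y t (hf _)).differentiableAt.hasDerivAt

lemma pdX_uncurried_contDiff {f : ℝ→ℝ→ℝ→E}
    (hf : ContDiff ℝ 2 (fun p : ℝ×ℝ×ℝ => f p.1 p.2.1 p.2.2)) :
    ContDiff ℝ 1 (fun p : ℝ×ℝ×ℝ => pdX f p.1 p.2.1 p.2.2) := by
  have h : (fun p : ℝ×ℝ×ℝ => pdX f p.1 p.2.1 p.2.2)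
      = fun p => fderiv ℝ (fun p : ℝ×ℝ×ℝ => f p.1 p.2.1 p.2.2) p (1,0,0) := by
    funext p
    exact (hasDerivAt_sliceX _ p.1 p.2.1 p.2.2 ((hf.differentiable two_ne_zero) _)).deriv
  rw [h]; exact fderiv_apply_contDiff hf _

lemma pdT_uncurried_contDiff {f : ℝ→ℝ→ℝ→E}
    (hf : ContDiff ℝ 2 (fun p : ℝ×ℝ×ℝ => f p.1 p.2.1 p.2.2)) :
    ContDiff ℝ 1 (fun p : ℝ×ℝ×ℝ => pdT f p.1 p.2.1 p.2.2) := by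
  have h : (fun p : ℝ×ℝ×ℝ => pdT f p.1 p.2.1 p.2.2)
      = fun p => fderiv ℝ (fun p : ℝ×ℝ×ℝ => f p.1 p.2.1 p.2.2) p (0,0,1) := by
    funext p
    exact (hasDerivAt_sliceT _ p.1 p.2.1 p.2.2 ((hf.differentiable two_ne_zero) _)).deriv
  rw [h]; exact fderiv_apply_contDiff hf _

end GaugeHelpers

lemma normSq_exp_I_mul (r : ℝ) (z : ℂ) :
    Complex.normSq (Complex.exp (Complex.I * (r : ℂ)) * z) = Complex.normSq z := by
  simp [Complex.normSq_mul, Complex.normSq_eq_norm_sq, Complex.norm_exp]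

/-- the finite gauge transformation generated by the symmetries
`𝒳₄, 𝒳₅, 𝒳₆` maps classical solutions of the BR/ZR system to classical solutions. -/
theorem brzr_gauge_symmetry
    (a ε₀ b c d m w : ℝ) (hm : 0 < m) (hw : 0 < w)
    (ψ : ℝ → ℝ → ℝ → ℂ) (φ : ℝ → ℝ → ℝ → ℝ)
    (hsol : IsBRZRSolution a ε₀ b w m c d ψ φ)
    (q₀ q₁ q₂ : ℝ) :
    IsBRZRSolution a ε₀ b w m c d
      (fun x y t => Complex.exp (Complex.I * ((q₂ * t ^ 2 + q₁ * t + q₀ : ℝ) : ℂ)) * ψ x y t)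
      (fun x y t => φ x y t + (q₂ * t ^ 2 + q₁ * t + q₀) / (m * w) + q₂ / w * x ^ 2) := by
  obtain ⟨hψ, hφ, hE1, hE2⟩ := hsol
  have hm0 : m ≠ 0 := ne_of_gt hm
  have hw0 : w ≠ 0 := ne_of_gt hw
  have hψd : Differentiable ℝ (fun p : ℝ×ℝ×ℝ => ψ p.1 p.2.1 p.2.2) := hψ.differentiable two_ne_zero
  have hφd : Differentiable ℝ (fun p : ℝ×ℝ×ℝ => φ p.1 p.2.1 p.2.2) := hφ.differentiable two_ne_zero
  have hpdXφd : Differentiable ℝ (fun p : ℝ×ℝ×ℝ => pdX φ p.1 p.2.1 p.2.2) :=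
    (pdX_uncurried_contDiff hφ).differentiable one_ne_zero
  have hpdTφd : Differentiable ℝ (fun p : ℝ×ℝ×ℝ => pdT φ p.1 p.2.1 p.2.2) :=
    (pdT_uncurried_contDiff hφ).differentiable one_ne_zero
  -- the gauge factor and its derivative
  set Ec : ℝ → ℂ := fun t => Complex.exp (Complex.I * ((q₂ * t ^ 2 + q₁ * t + q₀ : ℝ) : ℂ))
    with hEc_def
  have hχ : ∀ t : ℝ, HasDerivAt (fun s : ℝ => q₂*s^2+q₁*s+q₀) (2*q₂*t+q₁) t := by
    intro t
    have h := (((hasDerivAt_pow 2 t).const_mul q₂).add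
      ((hasDerivAt_id t).const_mul q₁)).add_const q₀
    exact h.congr_deriv (by push_cast; ring)
  have hEderiv : ∀ t : ℝ, HasDerivAt Ec (Complex.I * ((2*q₂*t+q₁ : ℝ) : ℂ) * Ec t) t := by
    intro t
    have h2 := (((hχ t).ofReal_comp).const_mul Complex.I).cexp
    convert h2 using 1; ring
  -- normSq of the gauge factor
  have hns : ∀ t : ℝ, ∀ z : ℂ, Complex.normSq (Ec t * z) = Complex.normSq z := by
    intro t z
    rw [hEc_def]
    exact normSq_exp_I_mul _ z
  refine ⟨?_, ?_, ?_, ?_⟩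
  · -- smoothness of ψ̃
    have hEcont : ContDiff ℝ 2 (fun p : ℝ×ℝ×ℝ => Ec p.2.2) := by
      have hexp : ContDiff ℝ 2 Complex.exp :=
        (Complex.contDiff_exp (𝕜 := ℂ) (n := 2)).restrict_scalars ℝ
      apply hexp.comp
      apply contDiff_const.mul
      have hpoly : ContDiff ℝ 2 (fun p : ℝ×ℝ×ℝ => q₂*p.2.2^2+q₁*p.2.2+q₀) := by fun_prop
      exact Complex.ofRealCLM.contDiff.comp hpoly
    exact hEcont.mul hψ
  · -- smoothness of φ̃
    refine (hφ.add ?_).add ?_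
    · apply ContDiff.div_const; fun_prop
    · fun_prop
  · -- equation (E1)
    intro x y t
    -- the x- and y-derivatives just pick up the constant factor Ec t
    have hX1 : ∀ x' y' t' : ℝ,
        pdX (fun x y t => Ec t * ψ x y t) x' y' t' = Ec t' * pdX ψ x' y' t' := by
      intro x' y' t'; exact deriv_const_mul_field _
    have hXX : pdX (pdX (fun x y t => Ec t * ψ x y t)) x y t = Ec t * pdX (pdX ψ) x y t := by
      show deriv (fun s => pdX (fun x y t => Ec t * ψ x y t) s y t) x
          = Ec t * pdX (pdX ψ) x y t
      have heq : (fun s => pdX (fun x y t => Ec t * ψ x y t) s y t)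
          = fun s => Ec t * pdX ψ s y t := funext fun s => hX1 s y t
      rw [heq]; exact deriv_const_mul_field _
    have hY1 : ∀ x' y' t' : ℝ,
        pdY (fun x y t => Ec t * ψ x y t) x' y' t' = Ec t' * pdY ψ x' y' t' := by
      intro x' y' t'; exact deriv_const_mul_field _
    have hYY : pdY (pdY (fun x y t => Ec t * ψ x y t)) x y t = Ec t * pdY (pdY ψ) x y t := by
      show deriv (fun s => pdY (fun x y t => Ec t * ψ x y t) x s t) y
          = Ec t * pdY (pdY ψ) x y t
      have heq : (fun s => pdY (fun x y t => Ec t * ψ x y t) x s t)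
          = fun s => Ec t * pdY ψ x s t := funext fun s => hY1 x s t
      rw [heq]; exact deriv_const_mul_field _
    -- time derivative of ψ̃
    have hT : pdT (fun x y t => Ec t * ψ x y t) x y t
        = Complex.I * ((2*q₂*t+q₁ : ℝ) : ℂ) * Ec t * ψ x y t + Ec t * pdT ψ x y t := by
      exact ((hEderiv t).mul (pd_hasDerivAt_T ψ hψd x y t)).deriv
    -- time and y derivatives of φ̃
    have hTφ : pdT (fun x y t => φ x y t + (q₂*t^2+q₁*t+q₀)/(m*w) + q₂/w*x^2) x y t
        = pdT φ x y t + (2*q₂*t+q₁)/(m*w) := by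
      exact (((pd_hasDerivAt_T φ hφd x y t).add ((hχ t).div_const (m*w))).add_const
        (q₂/w*x^2)).deriv
    have hYφ : pdY (fun x y t => φ x y t + (q₂*t^2+q₁*t+q₀)/(m*w) + q₂/w*x^2) x y t
        = pdY φ x y t := by
      show deriv (fun s => φ x s t + (q₂*t^2+q₁*t+q₀)/(m*w) + q₂/w*x^2) y = pdY φ x y t
      rw [deriv_add_const, deriv_add_const]; rfl
    show Complex.I * pdT (fun x y t => Ec t * ψ x y t) x y t
        + (a:ℂ) * pdX (pdX (fun x y t => Ec t * ψ x y t)) x y t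
        + (ε₀:ℂ) * pdY (pdY (fun x y t => Ec t * ψ x y t)) x y t
      = ((b - w*m : ℝ):ℂ) * ((Complex.normSq (Ec t * ψ x y t) : ℝ):ℂ) * (Ec t * ψ x y t)
        - (w:ℂ) * (Ec t * ψ x y t) *
          ((m * pdT (fun x y t => φ x y t + (q₂*t^2+q₁*t+q₀)/(m*w) + q₂/w*x^2) x y t
            + (m*c-d) * pdY (fun x y t => φ x y t + (q₂*t^2+q₁*t+q₀)/(m*w) + q₂/w*x^2) x y t
            : ℝ):ℂ)
    rw [hT, hXX, hYY, hns t, hTφ, hYφ]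
    have harith : m * (pdT φ x y t + (2*q₂*t+q₁)/(m*w)) + (m*c-d)*pdY φ x y t
        = (m * pdT φ x y t + (m*c-d)*pdY φ x y t) + (2*q₂*t+q₁)/w := by
      field_simp; ring
    rw [harith]
    have e1 := hE1 x y t
    have hw0c : (w:ℂ) ≠ 0 := Complex.ofReal_ne_zero.mpr hw0
    have hcan : (w:ℂ) * ((2*(q₂:ℂ)*(t:ℂ)+(q₁:ℂ))/(w:ℂ)) = 2*(q₂:ℂ)*(t:ℂ)+(q₁:ℂ) := by
      rw [mul_comm]; exact div_mul_cancel₀ _ hw0c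
    push_cast at e1 ⊢
    linear_combination Ec t * e1
      + Ec t * ψ x y t * (2*(q₂:ℂ)*(t:ℂ)+(q₁:ℂ)) * Complex.I_mul_I
      + Ec t * ψ x y t * hcan
  · -- equation (E2)
    intro x y t
    have hnsfun : (fun x y t : ℝ => Complex.normSq (Ec t * ψ x y t))
        = fun x y t => Complex.normSq (ψ x y t) := by
      funext x y t; exact hns t _
    have hXφ : ∀ x' y' t' : ℝ,
        pdX (fun x y t => φ x y t + (q₂*t^2+q₁*t+q₀)/(m*w) + q₂/w*x^2) x' y' t'
        = pdX φ x' y' t' + q₂/w*2*x' := by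
      intro x' y' t'
      have h := ((pd_hasDerivAt_X φ hφd x' y' t').add_const
        ((q₂*t'^2+q₁*t'+q₀)/(m*w))).add ((hasDerivAt_pow 2 x').const_mul (q₂/w))
      refine h.deriv.trans ?_
      push_cast; ring
    have hXXφ : pdX (pdX (fun x y t => φ x y t + (q₂*t^2+q₁*t+q₀)/(m*w) + q₂/w*x^2)) x y t
        = pdX (pdX φ) x y t + q₂/w*2 := by
      show deriv (fun s =>
          pdX (fun x y t => φ x y t + (q₂*t^2+q₁*t+q₀)/(m*w) + q₂/w*x^2) s y t) x
        = pdX (pdX φ) x y t + q₂/w*2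
      have heq : (fun s =>
            pdX (fun x y t => φ x y t + (q₂*t^2+q₁*t+q₀)/(m*w) + q₂/w*x^2) s y t)
          = fun s => pdX φ s y t + q₂/w*2*s := funext fun s => hXφ s y t
      rw [heq]
      have h := (pd_hasDerivAt_X (pdX φ) hpdXφd x y t).add
        ((hasDerivAt_id x).const_mul (q₂/w*2))
      exact h.deriv.trans (by ring)
    have hYφ : ∀ x' y' t' : ℝ,
        pdY (fun x y t => φ x y t + (q₂*t^2+q₁*t+q₀)/(m*w) + q₂/w*x^2) x' y' t'
        = pdY φ x' y' t' := by
      intro x' y' t'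
      show deriv (fun s => φ x' s t' + (q₂*t'^2+q₁*t'+q₀)/(m*w) + q₂/w*x'^2) y'
        = pdY φ x' y' t'
      rw [deriv_add_const, deriv_add_const]; rfl
    have hYYφ : pdY (pdY (fun x y t => φ x y t + (q₂*t^2+q₁*t+q₀)/(m*w) + q₂/w*x^2)) x y t
        = pdY (pdY φ) x y t := by
      show deriv (fun s =>
          pdY (fun x y t => φ x y t + (q₂*t^2+q₁*t+q₀)/(m*w) + q₂/w*x^2) x s t) y
        = pdY (pdY φ) x y t
      have heq : (fun s =>
            pdY (fun x y t => φ x y t + (q₂*t^2+q₁*t+q₀)/(m*w) + q₂/w*x^2) x s t)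
          = fun s => pdY φ x s t := funext fun s => hYφ x s t
      rw [heq]; rfl
    have hTφ : ∀ x' y' t' : ℝ,
        pdT (fun x y t => φ x y t + (q₂*t^2+q₁*t+q₀)/(m*w) + q₂/w*x^2) x' y' t'
        = pdT φ x' y' t' + (2*q₂*t'+q₁)/(m*w) := by
      intro x' y' t'
      exact (((pd_hasDerivAt_T φ hφd x' y' t').add ((hχ t').div_const (m*w))).add_const
        (q₂/w*x'^2)).deriv
    have hTTφ : pdT (pdT (fun x y t => φ x y t + (q₂*t^2+q₁*t+q₀)/(m*w) + q₂/w*x^2)) x y t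
        = pdT (pdT φ) x y t + 2*q₂/(m*w) := by
      show deriv (fun s =>
          pdT (fun x y t => φ x y t + (q₂*t^2+q₁*t+q₀)/(m*w) + q₂/w*x^2) x y s) t
        = pdT (pdT φ) x y t + 2*q₂/(m*w)
      have heq : (fun s =>
            pdT (fun x y t => φ x y t + (q₂*t^2+q₁*t+q₀)/(m*w) + q₂/w*x^2) x y s)
          = fun s => pdT φ x y s + (2*q₂*s+q₁)/(m*w) := funext fun s => hTφ x y s
      rw [heq]
      have h := (pd_hasDerivAt_T (pdT φ) hpdTφd x y t).add
        ((((hasDerivAt_id t).const_mul (2*q₂)).add_const q₁).div_const (m*w))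
      exact h.deriv.trans (by ring)
    have hYTφ : pdY (pdT (fun x y t => φ x y t + (q₂*t^2+q₁*t+q₀)/(m*w) + q₂/w*x^2)) x y t
        = pdY (pdT φ) x y t := by
      show deriv (fun s =>
          pdT (fun x y t => φ x y t + (q₂*t^2+q₁*t+q₀)/(m*w) + q₂/w*x^2) x s t) y
        = pdY (pdT φ) x y t
      have heq : (fun s =>
            pdT (fun x y t => φ x y t + (q₂*t^2+q₁*t+q₀)/(m*w) + q₂/w*x^2) x s t)
          = fun s => pdT φ x s t + (2*q₂*t+q₁)/(m*w) := funext fun s => hTφ x s t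
      rw [heq, deriv_add_const]; rfl
    show pdX (pdX (fun x y t => φ x y t + (q₂*t^2+q₁*t+q₀)/(m*w) + q₂/w*x^2)) x y t
        + (1 - m*c^2) * pdY (pdY (fun x y t => φ x y t + (q₂*t^2+q₁*t+q₀)/(m*w) + q₂/w*x^2)) x y t
        - m * pdT (pdT (fun x y t => φ x y t + (q₂*t^2+q₁*t+q₀)/(m*w) + q₂/w*x^2)) x y t
        - 2*m*c * pdY (pdT (fun x y t => φ x y t + (q₂*t^2+q₁*t+q₀)/(m*w) + q₂/w*x^2)) x y t
      = m * pdT (fun x y t => Complex.normSq (Ec t * ψ x y t)) x y t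
        + (m*c-d) * pdY (fun x y t => Complex.normSq (Ec t * ψ x y t)) x y t
    rw [hXXφ, hYYφ, hTTφ, hYTφ, hnsfun]
    have haux : m * (2*q₂/(m*w)) = q₂/w*2 := by field_simp
    linear_combination hE2 x y t - haux
end

section
/- Let a, ε₀, b, c ∈ ℝ, w > 0, d > 0, and m > d², and let (ψ, φ) be a classical solution of the BR/ZR system. Then for any twice differentiable harmonic function H : ℝ² → ℝ (i.e. ∂₁²H + ∂₂²H = 0 everywhere), the pair (ψ, φ̃) with φ̃(x,y,t) = φ(x,y,t) + H(x, (my − (mc − d)t)/√(m(m − d²))) is also a classical solution of the BR/ZR system. (This is the symmetry generated by 𝒫_B(H) in the case m > d².) -/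
section aux
variable {E : Type*} [NormedAddCommGroup E] [NormedSpace ℝ E]

lemma hasDerivAt_slice3_1 (u : ℝ × ℝ × ℝ → E) {x y t : ℝ} (hu : DifferentiableAt ℝ u (x, y, t)) :
    HasDerivAt (fun s => u (s, y, t)) (fderiv ℝ u (x, y, t) (1, 0, 0)) x := by
  have h1 : HasDerivAt (fun s : ℝ => ((s, y, t) : ℝ × ℝ × ℝ)) ((1 : ℝ), (0 : ℝ), (0 : ℝ)) x :=
    (hasDerivAt_id x).prodMk ((hasDerivAt_const x y).prodMk (hasDerivAt_const x t))
  exact hu.hasFDerivAt.comp_hasDerivAt x h1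

lemma hasDerivAt_slice3_2 (u : ℝ × ℝ × ℝ → E) {x y t : ℝ} (hu : DifferentiableAt ℝ u (x, y, t)) :
    HasDerivAt (fun s => u (x, s, t)) (fderiv ℝ u (x, y, t) (0, 1, 0)) y := by
  have h1 : HasDerivAt (fun s : ℝ => ((x, s, t) : ℝ × ℝ × ℝ)) ((0 : ℝ), (1 : ℝ), (0 : ℝ)) y :=
    (hasDerivAt_const y x).prodMk ((hasDerivAt_id y).prodMk (hasDerivAt_const y t))
  exact hu.hasFDerivAt.comp_hasDerivAt y h1

lemma hasDerivAt_slice3_3 (u : ℝ × ℝ × ℝ → E) {x y t : ℝ} (hu : DifferentiableAt ℝ u (x, y, t)) :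
    HasDerivAt (fun s => u (x, y, s)) (fderiv ℝ u (x, y, t) (0, 0, 1)) t := by
  have h1 : HasDerivAt (fun s : ℝ => ((x, y, s) : ℝ × ℝ × ℝ)) ((0 : ℝ), (0 : ℝ), (1 : ℝ)) t :=
    (hasDerivAt_const t x).prodMk ((hasDerivAt_const t y).prodMk (hasDerivAt_id t))
  exact hu.hasFDerivAt.comp_hasDerivAt t h1

lemma hasDerivAt_slice2_1 (u : ℝ × ℝ → E) {x y : ℝ} (hu : DifferentiableAt ℝ u (x, y)) :
    HasDerivAt (fun s => u (s, y)) (fderiv ℝ u (x, y) (1, 0)) x := by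
  have h1 : HasDerivAt (fun s : ℝ => ((s, y) : ℝ × ℝ)) ((1 : ℝ), (0 : ℝ)) x :=
    (hasDerivAt_id x).prodMk (hasDerivAt_const x y)
  exact hu.hasFDerivAt.comp_hasDerivAt x h1

lemma hasDerivAt_slice2_2 (u : ℝ × ℝ → E) {x y : ℝ} (hu : DifferentiableAt ℝ u (x, y)) :
    HasDerivAt (fun s => u (x, s)) (fderiv ℝ u (x, y) (0, 1)) y := by
  have h1 : HasDerivAt (fun s : ℝ => ((x, s) : ℝ × ℝ)) ((0 : ℝ), (1 : ℝ)) y :=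
    (hasDerivAt_const y x).prodMk (hasDerivAt_id y)
  exact hu.hasFDerivAt.comp_hasDerivAt y h1

/-- affine slice in second coordinate -/
lemma hasDerivAt_slice2_affine (u : ℝ × ℝ → E) {x σ : ℝ} (k c : ℝ)
    (hu : DifferentiableAt ℝ u (x, k * σ + c)) :
    HasDerivAt (fun s => u (x, k * s + c)) (k • fderiv ℝ u (x, k * σ + c) (0, 1)) σ := by
  have hin : HasDerivAt (fun s : ℝ => k * s + c) k σ := by
    simpa using ((hasDerivAt_id σ).const_mul k).add_const c
  have houter := hasDerivAt_slice2_2 u hu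
  simpa [smul_eq_mul, mul_comm, Function.comp_def] using houter.scomp σ hin

/-- affine slice in second coordinate, constant first -/
lemma hasDerivAt_slice2_affine' (u : ℝ × ℝ → E) {x σ : ℝ} (c l : ℝ)
    (hu : DifferentiableAt ℝ u (x, c + l * σ)) :
    HasDerivAt (fun s => u (x, c + l * s)) (l • fderiv ℝ u (x, c + l * σ) (0, 1)) σ := by
  have hin : HasDerivAt (fun s : ℝ => c + l * s) l σ := by
    simpa using (((hasDerivAt_id σ).const_mul l).const_add c)
  have houter := hasDerivAt_slice2_2 u hu
  simpa [smul_eq_mul, mul_comm, Function.comp_def] using houter.scomp σ hin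

lemma clm_expand (L : ℝ × ℝ →L[ℝ] ℝ) (v : ℝ × ℝ) :
    L v = v.1 * L (1, 0) + v.2 * L (0, 1) := by
  have hv : v = v.1 • ((1 : ℝ), (0 : ℝ)) + v.2 • ((0 : ℝ), (1 : ℝ)) := by
    ext <;> simp
  nth_rewrite 1 [hv]
  rw [map_add, map_smul, map_smul, smul_eq_mul, smul_eq_mul]

end aux

section harm

variable (F : ℝ × ℝ → ℝ)

/-- Smoothness of a twice-differentiable pointwise-harmonic function on ℝ²,
via holomorphy of `∂₁F - i ∂₂F`. -/
lemma harmonic_contDiff (hF : Differentiable ℝ F) (hF' : Differentiable ℝ (fderiv ℝ F))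
    (hlap : ∀ p : ℝ × ℝ,
      fderiv ℝ (fun q => fderiv ℝ F q (1, 0)) p (1, 0)
        + fderiv ℝ (fun q => fderiv ℝ F q (0, 1)) p (0, 1) = 0) :
    ContDiff ℝ (⊤ : ℕ∞) F := by
  set P1 : ℝ × ℝ → ℝ := fun q => fderiv ℝ F q (1, 0) with hP1def
  set P2 : ℝ × ℝ → ℝ := fun q => fderiv ℝ F q (0, 1) with hP2def
  have hP1d : Differentiable ℝ P1 := fun p =>
    ((ContinuousLinearMap.apply ℝ ℝ ((1 : ℝ), (0 : ℝ))).differentiable.differentiableAt).comp p (hF' p)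
  have hP2d : Differentiable ℝ P2 := fun p =>
    ((ContinuousLinearMap.apply ℝ ℝ ((0 : ℝ), (1 : ℝ))).differentiable.differentiableAt).comp p (hF' p)
  have hfP1 : ∀ (p v : ℝ × ℝ), fderiv ℝ P1 p v = (fderiv ℝ (fderiv ℝ F) p v) (1, 0) := by
    intro p v
    have h : HasFDerivAt P1
        ((ContinuousLinearMap.apply ℝ ℝ ((1 : ℝ), (0 : ℝ))).comp (fderiv ℝ (fderiv ℝ F) p)) p :=
      (ContinuousLinearMap.apply ℝ ℝ ((1 : ℝ), (0 : ℝ))).hasFDerivAt.comp p (hF' p).hasFDerivAt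
    rw [h.fderiv]; rfl
  have hfP2 : ∀ (p v : ℝ × ℝ), fderiv ℝ P2 p v = (fderiv ℝ (fderiv ℝ F) p v) (0, 1) := by
    intro p v
    have h : HasFDerivAt P2
        ((ContinuousLinearMap.apply ℝ ℝ ((0 : ℝ), (1 : ℝ))).comp (fderiv ℝ (fderiv ℝ F) p)) p :=
      (ContinuousLinearMap.apply ℝ ℝ ((0 : ℝ), (1 : ℝ))).hasFDerivAt.comp p (hF' p).hasFDerivAt
    rw [h.fderiv]; rfl
  have hSym : ∀ p : ℝ × ℝ, fderiv ℝ P1 p (0, 1) = fderiv ℝ P2 p (1, 0) := by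
    intro p
    rw [hfP1 p (0, 1), hfP2 p (1, 0)]
    exact second_derivative_symmetric (fun q => (hF q).hasFDerivAt) (hF' p).hasFDerivAt (0, 1) (1, 0)
  have hLap : ∀ p : ℝ × ℝ, fderiv ℝ P1 p (1, 0) + fderiv ℝ P2 p (0, 1) = 0 := hlap
  -- the complex function
  set g : ℂ → ℂ := fun z =>
    Complex.equivRealProdCLM.symm (P1 (z.re, z.im), -P2 (z.re, z.im)) with hgdef
  have hg : Differentiable ℂ g := by
    intro z
    have hinner : HasFDerivAt (fun w : ℂ => ((w.re, w.im) : ℝ × ℝ))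
        (Complex.reCLM.prod Complex.imCLM) z :=
      Complex.reCLM.hasFDerivAt.prodMk Complex.imCLM.hasFDerivAt
    have hmid : HasFDerivAt (fun p : ℝ × ℝ => ((P1 p, -P2 p) : ℝ × ℝ))
        ((fderiv ℝ P1 (z.re, z.im)).prod (-(fderiv ℝ P2 (z.re, z.im)))) (z.re, z.im) :=
      (hP1d _).hasFDerivAt.prodMk ((hP2d _).hasFDerivAt.neg)
    have houter : HasFDerivAt (fun p : ℝ × ℝ => (Complex.equivRealProdCLM.symm p : ℂ))
        (Complex.equivRealProdCLM.symm : ℝ × ℝ →L[ℝ] ℂ)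
        ((P1 (z.re, z.im), -P2 (z.re, z.im)) : ℝ × ℝ) :=
      Complex.equivRealProdCLM.symm.hasFDerivAt
    have hreal : HasFDerivAt g
        (((Complex.equivRealProdCLM.symm : ℝ × ℝ →L[ℝ] ℂ).comp
          ((fderiv ℝ P1 (z.re, z.im)).prod (-(fderiv ℝ P2 (z.re, z.im))))).comp
          (Complex.reCLM.prod Complex.imCLM)) z :=
      by have := houter.comp z (hmid.comp z hinner); exact this
    set a1 : ℝ := fderiv ℝ P1 (z.re, z.im) (1, 0) with ha1
    set b1 : ℝ := fderiv ℝ P2 (z.re, z.im) (1, 0) with hb1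
    refine ⟨(Complex.I * (-b1 : ℝ) + (a1 : ℝ)) • ContinuousLinearMap.id ℂ ℂ,
      hasFDerivAt_of_restrictScalars ℝ hreal ?_⟩
    apply ContinuousLinearMap.ext
    intro h
    have hA := clm_expand (fderiv ℝ P1 (z.re, z.im)) (h.re, h.im)
    have hB := clm_expand (fderiv ℝ P2 (z.re, z.im)) (h.re, h.im)
    have e1 : fderiv ℝ P1 (z.re, z.im) (0, 1) = b1 := hSym (z.re, z.im)
    have e2 : fderiv ℝ P2 (z.re, z.im) (0, 1) = -a1 := by
      have := hLap (z.re, z.im); rw [← ha1] at this; linarith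
    simp only [ContinuousLinearMap.coe_restrictScalars',
      ContinuousLinearMap.coe_smul', Pi.smul_apply, ContinuousLinearMap.coe_id', id_eq,
      ContinuousLinearMap.coe_comp', Function.comp_apply, ContinuousLinearMap.prod_apply,
      Complex.reCLM_apply, Complex.imCLM_apply, ContinuousLinearMap.neg_apply,
      ContinuousLinearEquiv.coe_coe, Complex.equivRealProdCLM_symm_apply, smul_eq_mul]
    rw [hA, hB, e1, e2, ← ha1, ← hb1]
    apply Complex.ext <;>
      simp [Complex.ext_iff, Complex.mul_re, Complex.mul_im] <;> ring
  have hgC : ContDiff ℂ (⊤ : ℕ∞) g :=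
    contDiff_iff_contDiffAt.2 fun z => (hg.analyticAt z).contDiffAt
  have hgR : ContDiff ℝ (⊤ : ℕ∞) g := hgC.restrict_scalars ℝ
  have hP1C : ContDiff ℝ (⊤ : ℕ∞) P1 := by
    have hrw : P1 = fun p : ℝ × ℝ => (g (Complex.equivRealProdCLM.symm p)).re := by
      funext p
      simp [hgdef, Complex.equivRealProdCLM_symm_apply]
    rw [hrw]
    exact Complex.reCLM.contDiff.comp (hgR.comp Complex.equivRealProdCLM.symm.contDiff)
  have hP2C : ContDiff ℝ (⊤ : ℕ∞) P2 := by
    have hrw : P2 = fun p : ℝ × ℝ => -(g (Complex.equivRealProdCLM.symm p)).im := by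
      funext p
      simp [hgdef, Complex.equivRealProdCLM_symm_apply]
    rw [hrw]
    exact (Complex.imCLM.contDiff.comp (hgR.comp Complex.equivRealProdCLM.symm.contDiff)).neg
  have hrepr : fderiv ℝ F = fun p =>
      P1 p • (ContinuousLinearMap.fst ℝ ℝ ℝ) + P2 p • (ContinuousLinearMap.snd ℝ ℝ ℝ) := by
    funext p
    apply ContinuousLinearMap.ext
    intro v
    rw [clm_expand (fderiv ℝ F p) v]
    simp only [ContinuousLinearMap.add_apply, ContinuousLinearMap.smul_apply,
      ContinuousLinearMap.coe_fst', ContinuousLinearMap.coe_snd', smul_eq_mul]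
    ring
  rw [contDiff_infty_iff_fderiv]
  exact ⟨hF, by rw [hrepr]; exact (hP1C.smul contDiff_const).add (hP2C.smul contDiff_const)⟩

end harm


/-- in the case `m > d²`, shifting `φ` by a harmonic function
`H(x, (my − (mc − d)t)/√(m(m − d²)))` maps classical solutions of the BR/ZR system to
classical solutions (the symmetry `𝒫_B(H)`). -/
theorem brzr_symmetry_PB
    (a ε₀ b c d m w : ℝ) (hw : 0 < w) (hd : 0 < d) (hmd : d ^ 2 < m)
    (ψ : ℝ → ℝ → ℝ → ℂ) (φ : ℝ → ℝ → ℝ → ℝ)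
    (hsol : IsBRZRSolution a ε₀ b w m c d ψ φ)
    (H : ℝ → ℝ → ℝ)
    (hH : Differentiable ℝ (fun p : ℝ × ℝ => H p.1 p.2))
    (hH' : Differentiable ℝ (fderiv ℝ (fun p : ℝ × ℝ => H p.1 p.2)))
    (hharm : ∀ x σ : ℝ,
      deriv (fun s => deriv (fun s' => H s' σ) s) x
        + deriv (fun s => deriv (fun s' => H x s') s) σ = 0) :
    IsBRZRSolution a ε₀ b w m c d ψ
      (fun x y t => φ x y t
        + H x ((m * y - (m * c - d) * t) / Real.sqrt (m * (m - d ^ 2)))) := by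
  have hm : 0 < m := lt_of_le_of_lt (sq_nonneg d) hmd
  set F : ℝ × ℝ → ℝ := fun p : ℝ × ℝ => H p.1 p.2 with hFdef
  -- partial derivatives of F
  have hP1d : Differentiable ℝ (fun q : ℝ × ℝ => fderiv ℝ F q (1, 0)) := fun p =>
    ((ContinuousLinearMap.apply ℝ ℝ ((1 : ℝ), (0 : ℝ))).differentiable.differentiableAt).comp p
      (hH' p)
  have hP2d : Differentiable ℝ (fun q : ℝ × ℝ => fderiv ℝ F q (0, 1)) := fun p =>
    ((ContinuousLinearMap.apply ℝ ℝ ((0 : ℝ), (1 : ℝ))).differentiable.differentiableAt).comp p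
      (hH' p)
  have hsliceH1 : ∀ a b : ℝ, HasDerivAt (fun s => H s b) (fderiv ℝ F (a, b) (1, 0)) a :=
    fun a b => hasDerivAt_slice2_1 F (hH _)
  have hsliceH2 : ∀ a b : ℝ, HasDerivAt (fun s => H a s) (fderiv ℝ F (a, b) (0, 1)) b :=
    fun a b => hasDerivAt_slice2_2 F (hH _)
  have hLap : ∀ p : ℝ × ℝ,
      fderiv ℝ (fun q : ℝ × ℝ => fderiv ℝ F q (1, 0)) p (1, 0)
        + fderiv ℝ (fun q : ℝ × ℝ => fderiv ℝ F q (0, 1)) p (0, 1) = 0 := by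
    rintro ⟨x, σ⟩
    have h := hharm x σ
    have e1 : (fun s => deriv (fun s' => H s' σ) s)
        = fun s => fderiv ℝ F (s, σ) (1, 0) := funext fun s' => (hsliceH1 s' σ).deriv
    have e2 : (fun s => deriv (fun s' => H x s') s)
        = fun s => fderiv ℝ F (x, s) (0, 1) := funext fun s' => (hsliceH2 x s').deriv
    rw [e1, e2] at h
    have d1 : deriv (fun s => fderiv ℝ F (s, σ) (1, 0)) x
        = fderiv ℝ (fun q : ℝ × ℝ => fderiv ℝ F q (1, 0)) (x, σ) (1, 0) :=
      (hasDerivAt_slice2_1 (fun q : ℝ × ℝ => fderiv ℝ F q (1, 0)) (hP1d (x, σ))).deriv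
    have d2 : deriv (fun s => fderiv ℝ F (x, s) (0, 1)) σ
        = fderiv ℝ (fun q : ℝ × ℝ => fderiv ℝ F q (0, 1)) (x, σ) (0, 1) :=
      (hasDerivAt_slice2_2 (fun q : ℝ × ℝ => fderiv ℝ F q (0, 1)) (hP2d (x, σ))).deriv
    rw [d1, d2] at h
    exact h
  have hFC : ContDiff ℝ (⊤ : ℕ∞) F := harmonic_contDiff F hH hH' hLap
  -- set up the affine change of variables
  set sq : ℝ := Real.sqrt (m * (m - d ^ 2)) with hsqdef
  have hsqpos : 0 < sq := Real.sqrt_pos.2 (by nlinarith)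
  have hsqne : sq ≠ 0 := ne_of_gt hsqpos
  have hsq2 : sq ^ 2 = m * (m - d ^ 2) := Real.sq_sqrt (by nlinarith)
  set k : ℝ := m / sq with hkdef
  set l : ℝ := -((m * c - d) / sq) with hldef
  have hkl : ∀ y t : ℝ, (m * y - (m * c - d) * t) / sq = k * y + l * t := by
    intro y t
    rw [hkdef, hldef]
    field_simp
    ring
  have hfun : (fun x y t => φ x y t + H x ((m * y - (m * c - d) * t) / sq))
      = fun x y t => φ x y t + F (x, k * y + l * t) := by
    funext x y t
    rw [hkl y t]
  rw [hfun]
  obtain ⟨hψ, hφ, hE1, hE2⟩ := hsol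
  set Uφ : ℝ × ℝ × ℝ → ℝ := fun p : ℝ × ℝ × ℝ => φ p.1 p.2.1 p.2.2 with hUφdef
  have hφdiff : Differentiable ℝ Uφ := hφ.differentiable (by norm_num)
  have hφ' : ContDiff ℝ 1 (fderiv ℝ Uφ) := hφ.fderiv_right (by norm_num)
  have hD1d : Differentiable ℝ (fun p : ℝ × ℝ × ℝ => fderiv ℝ Uφ p (1, 0, 0)) := fun p =>
    ((ContinuousLinearMap.apply ℝ ℝ ((1 : ℝ), (0 : ℝ), (0 : ℝ))).differentiable.differentiableAt).comp p
      ((hφ'.differentiable one_ne_zero) p)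
  have hD2d : Differentiable ℝ (fun p : ℝ × ℝ × ℝ => fderiv ℝ Uφ p (0, 1, 0)) := fun p =>
    ((ContinuousLinearMap.apply ℝ ℝ ((0 : ℝ), (1 : ℝ), (0 : ℝ))).differentiable.differentiableAt).comp p
      ((hφ'.differentiable one_ne_zero) p)
  have hD3d : Differentiable ℝ (fun p : ℝ × ℝ × ℝ => fderiv ℝ Uφ p (0, 0, 1)) := fun p =>
    ((ContinuousLinearMap.apply ℝ ℝ ((0 : ℝ), (0 : ℝ), (1 : ℝ))).differentiable.differentiableAt).comp p
      ((hφ'.differentiable one_ne_zero) p)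
  -- slice derivatives of φ
  have hφs1 : ∀ x y t : ℝ, HasDerivAt (fun s => φ s y t) (fderiv ℝ Uφ (x, y, t) (1, 0, 0)) x :=
    fun x y t => hasDerivAt_slice3_1 Uφ (hφdiff _)
  have hφs2 : ∀ x y t : ℝ, HasDerivAt (fun s => φ x s t) (fderiv ℝ Uφ (x, y, t) (0, 1, 0)) y :=
    fun x y t => hasDerivAt_slice3_2 Uφ (hφdiff _)
  have hφs3 : ∀ x y t : ℝ, HasDerivAt (fun s => φ x y s) (fderiv ℝ Uφ (x, y, t) (0, 0, 1)) t :=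
    fun x y t => hasDerivAt_slice3_3 Uφ (hφdiff _)
  -- slice derivatives of the shift G(x,y,t) = F (x, k y + l t)
  have hGs1 : ∀ x y t : ℝ, HasDerivAt (fun s => F (s, k * y + l * t))
      (fderiv ℝ F (x, k * y + l * t) (1, 0)) x :=
    fun x y t => hasDerivAt_slice2_1 F (hH _)
  have hGs2 : ∀ x y t : ℝ, HasDerivAt (fun s => F (x, k * s + l * t))
      (k • fderiv ℝ F (x, k * y + l * t) (0, 1)) y :=
    fun x y t => hasDerivAt_slice2_affine F k (l * t) (hH _)
  have hGs3 : ∀ x y t : ℝ, HasDerivAt (fun s => F (x, k * y + l * s))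
      (l • fderiv ℝ F (x, k * y + l * t) (0, 1)) t :=
    fun x y t => hasDerivAt_slice2_affine' F (k * y) l (hH _)
  set Φ : ℝ → ℝ → ℝ → ℝ := fun x y t => φ x y t + F (x, k * y + l * t) with hΦdef
  -- first-order partials of Φ
  have epx : ∀ x y t : ℝ, pdX Φ x y t
      = fderiv ℝ Uφ (x, y, t) (1, 0, 0) + fderiv ℝ F (x, k * y + l * t) (1, 0) :=
    fun x y t => ((hφs1 x y t).add (hGs1 x y t)).deriv
  have epy : ∀ x y t : ℝ, pdY Φ x y t
      = fderiv ℝ Uφ (x, y, t) (0, 1, 0) + k • fderiv ℝ F (x, k * y + l * t) (0, 1) :=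
    fun x y t => ((hφs2 x y t).add (hGs2 x y t)).deriv
  have ept : ∀ x y t : ℝ, pdT Φ x y t
      = fderiv ℝ Uφ (x, y, t) (0, 0, 1) + l • fderiv ℝ F (x, k * y + l * t) (0, 1) :=
    fun x y t => ((hφs3 x y t).add (hGs3 x y t)).deriv
  have epxφ : ∀ x y t : ℝ, pdX φ x y t = fderiv ℝ Uφ (x, y, t) (1, 0, 0) :=
    fun x y t => (hφs1 x y t).deriv
  have epyφ : ∀ x y t : ℝ, pdY φ x y t = fderiv ℝ Uφ (x, y, t) (0, 1, 0) :=
    fun x y t => (hφs2 x y t).deriv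
  have eptφ : ∀ x y t : ℝ, pdT φ x y t = fderiv ℝ Uφ (x, y, t) (0, 0, 1) :=
    fun x y t => (hφs3 x y t).deriv
  refine ⟨hψ, ?_, ?_, ?_⟩
  · -- smoothness
    have hinner : ContDiff ℝ 2 (fun p : ℝ × ℝ × ℝ => ((p.1, k * p.2.1 + l * p.2.2) : ℝ × ℝ)) :=
      contDiff_fst.prodMk ((contDiff_const.mul (contDiff_fst.comp contDiff_snd)).add
        (contDiff_const.mul (contDiff_snd.comp contDiff_snd)))
    exact hφ.add ((hFC.of_le (WithTop.coe_le_coe.mpr le_top)).comp hinner)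
  · -- equation E1
    intro x y t
    have harg : m * pdT Φ x y t + (m * c - d) * pdY Φ x y t
        = m * pdT φ x y t + (m * c - d) * pdY φ x y t := by
      rw [ept x y t, epy x y t, eptφ x y t, epyφ x y t]
      have hzero : m * l + (m * c - d) * k = 0 := by
        rw [hkdef, hldef]; field_simp; ring
      simp only [smul_eq_mul]
      linear_combination (fderiv ℝ F (x, k * y + l * t) (0, 1)) * hzero
    calc Complex.I * pdT ψ x y t + (a : ℂ) * pdX (pdX ψ) x y t
          + (ε₀ : ℂ) * pdY (pdY ψ) x y t
        = ((b - w * m : ℝ) : ℂ) * ((Complex.normSq (ψ x y t) : ℝ) : ℂ) * ψ x y t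
          - (w : ℂ) * ψ x y t *
            ((m * pdT φ x y t + (m * c - d) * pdY φ x y t : ℝ) : ℂ) := hE1 x y t
      _ = _ := by rw [← harg]
  · -- equation E2
    intro x y t
    have e11 : pdX (pdX Φ) x y t = pdX (pdX φ) x y t
        + fderiv ℝ (fun q : ℝ × ℝ => fderiv ℝ F q (1, 0)) (x, k * y + l * t) (1, 0) := by
      have h1 : (fun s => pdX Φ s y t)
          = fun s => fderiv ℝ Uφ (s, y, t) (1, 0, 0) + fderiv ℝ F (s, k * y + l * t) (1, 0) :=
        funext fun s' => epx s' y t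
      have h2 : (fun s => pdX φ s y t) = fun s => fderiv ℝ Uφ (s, y, t) (1, 0, 0) :=
        funext fun s' => epxφ s' y t
      have key : deriv (fun s => fderiv ℝ Uφ (s, y, t) (1, 0, 0)
            + fderiv ℝ F (s, k * y + l * t) (1, 0)) x
          = fderiv ℝ (fun p : ℝ × ℝ × ℝ => fderiv ℝ Uφ p (1, 0, 0)) (x, y, t) (1, 0, 0)
            + fderiv ℝ (fun q : ℝ × ℝ => fderiv ℝ F q (1, 0)) (x, k * y + l * t) (1, 0) :=
        ((hasDerivAt_slice3_1 (fun p : ℝ × ℝ × ℝ => fderiv ℝ Uφ p (1, 0, 0)) (hD1d (x, y, t))).add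
          (hasDerivAt_slice2_1 (fun q : ℝ × ℝ => fderiv ℝ F q (1, 0)) (hP1d (x, k * y + l * t)))).deriv
      have key2 : deriv (fun s => fderiv ℝ Uφ (s, y, t) (1, 0, 0)) x
          = fderiv ℝ (fun p : ℝ × ℝ × ℝ => fderiv ℝ Uφ p (1, 0, 0)) (x, y, t) (1, 0, 0) :=
        (hasDerivAt_slice3_1 (fun p : ℝ × ℝ × ℝ => fderiv ℝ Uφ p (1, 0, 0)) (hD1d (x, y, t))).deriv
      show deriv (fun s => pdX Φ s y t) x = deriv (fun s => pdX φ s y t) x + _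
      rw [h1, h2, key, key2]
    have e22 : pdY (pdY Φ) x y t = pdY (pdY φ) x y t
        + k * (k • fderiv ℝ (fun q : ℝ × ℝ => fderiv ℝ F q (0, 1)) (x, k * y + l * t) (0, 1)) := by
      have h1 : (fun s => pdY Φ x s t)
          = fun s => fderiv ℝ Uφ (x, s, t) (0, 1, 0)
            + k * fderiv ℝ F (x, k * s + l * t) (0, 1) := by
        funext s'
        rw [epy x s' t]; rw [smul_eq_mul]
      have h2 : (fun s => pdY φ x s t) = fun s => fderiv ℝ Uφ (x, s, t) (0, 1, 0) :=
        funext fun s' => epyφ x s' t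
      have key : deriv (fun s => fderiv ℝ Uφ (x, s, t) (0, 1, 0)
            + k * fderiv ℝ F (x, k * s + l * t) (0, 1)) y
          = fderiv ℝ (fun p : ℝ × ℝ × ℝ => fderiv ℝ Uφ p (0, 1, 0)) (x, y, t) (0, 1, 0)
            + k * (k • fderiv ℝ (fun q : ℝ × ℝ => fderiv ℝ F q (0, 1)) (x, k * y + l * t) (0, 1)) :=
        ((hasDerivAt_slice3_2 (fun p : ℝ × ℝ × ℝ => fderiv ℝ Uφ p (0, 1, 0)) (hD2d (x, y, t))).add
          ((hasDerivAt_slice2_affine (fun q : ℝ × ℝ => fderiv ℝ F q (0, 1)) k (l * t)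
            (hP2d (x, k * y + l * t))).const_mul k)).deriv
      have key2 : deriv (fun s => fderiv ℝ Uφ (x, s, t) (0, 1, 0)) y
          = fderiv ℝ (fun p : ℝ × ℝ × ℝ => fderiv ℝ Uφ p (0, 1, 0)) (x, y, t) (0, 1, 0) :=
        (hasDerivAt_slice3_2 (fun p : ℝ × ℝ × ℝ => fderiv ℝ Uφ p (0, 1, 0)) (hD2d (x, y, t))).deriv
      show deriv (fun s => pdY Φ x s t) y = deriv (fun s => pdY φ x s t) y + _
      rw [h1, h2, key, key2]
    have e33 : pdT (pdT Φ) x y t = pdT (pdT φ) x y t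
        + l * (l • fderiv ℝ (fun q : ℝ × ℝ => fderiv ℝ F q (0, 1)) (x, k * y + l * t) (0, 1)) := by
      have h1 : (fun s => pdT Φ x y s)
          = fun s => fderiv ℝ Uφ (x, y, s) (0, 0, 1)
            + l * fderiv ℝ F (x, k * y + l * s) (0, 1) := by
        funext s'
        rw [ept x y s']; rw [smul_eq_mul]
      have h2 : (fun s => pdT φ x y s) = fun s => fderiv ℝ Uφ (x, y, s) (0, 0, 1) :=
        funext fun s' => eptφ x y s'
      have key : deriv (fun s => fderiv ℝ Uφ (x, y, s) (0, 0, 1)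
            + l * fderiv ℝ F (x, k * y + l * s) (0, 1)) t
          = fderiv ℝ (fun p : ℝ × ℝ × ℝ => fderiv ℝ Uφ p (0, 0, 1)) (x, y, t) (0, 0, 1)
            + l * (l • fderiv ℝ (fun q : ℝ × ℝ => fderiv ℝ F q (0, 1)) (x, k * y + l * t) (0, 1)) :=
        ((hasDerivAt_slice3_3 (fun p : ℝ × ℝ × ℝ => fderiv ℝ Uφ p (0, 0, 1)) (hD3d (x, y, t))).add
          ((hasDerivAt_slice2_affine' (fun q : ℝ × ℝ => fderiv ℝ F q (0, 1)) (k * y) l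
            (hP2d (x, k * y + l * t))).const_mul l)).deriv
      have key2 : deriv (fun s => fderiv ℝ Uφ (x, y, s) (0, 0, 1)) t
          = fderiv ℝ (fun p : ℝ × ℝ × ℝ => fderiv ℝ Uφ p (0, 0, 1)) (x, y, t) (0, 0, 1) :=
        (hasDerivAt_slice3_3 (fun p : ℝ × ℝ × ℝ => fderiv ℝ Uφ p (0, 0, 1)) (hD3d (x, y, t))).deriv
      show deriv (fun s => pdT Φ x y s) t = deriv (fun s => pdT φ x y s) t + _
      rw [h1, h2, key, key2]
    have e23 : pdY (pdT Φ) x y t = pdY (pdT φ) x y t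
        + l * (k • fderiv ℝ (fun q : ℝ × ℝ => fderiv ℝ F q (0, 1)) (x, k * y + l * t) (0, 1)) := by
      have h1 : (fun s => pdT Φ x s t)
          = fun s => fderiv ℝ Uφ (x, s, t) (0, 0, 1)
            + l * fderiv ℝ F (x, k * s + l * t) (0, 1) := by
        funext s'
        rw [ept x s' t]; rw [smul_eq_mul]
      have h2 : (fun s => pdT φ x s t) = fun s => fderiv ℝ Uφ (x, s, t) (0, 0, 1) :=
        funext fun s' => eptφ x s' t
      have key : deriv (fun s => fderiv ℝ Uφ (x, s, t) (0, 0, 1)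
            + l * fderiv ℝ F (x, k * s + l * t) (0, 1)) y
          = fderiv ℝ (fun p : ℝ × ℝ × ℝ => fderiv ℝ Uφ p (0, 0, 1)) (x, y, t) (0, 1, 0)
            + l * (k • fderiv ℝ (fun q : ℝ × ℝ => fderiv ℝ F q (0, 1)) (x, k * y + l * t) (0, 1)) :=
        ((hasDerivAt_slice3_2 (fun p : ℝ × ℝ × ℝ => fderiv ℝ Uφ p (0, 0, 1)) (hD3d (x, y, t))).add
          ((hasDerivAt_slice2_affine (fun q : ℝ × ℝ => fderiv ℝ F q (0, 1)) k (l * t)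
            (hP2d (x, k * y + l * t))).const_mul l)).deriv
      have key2 : deriv (fun s => fderiv ℝ Uφ (x, s, t) (0, 0, 1)) y
          = fderiv ℝ (fun p : ℝ × ℝ × ℝ => fderiv ℝ Uφ p (0, 0, 1)) (x, y, t) (0, 1, 0) :=
        (hasDerivAt_slice3_2 (fun p : ℝ × ℝ × ℝ => fderiv ℝ Uφ p (0, 0, 1)) (hD3d (x, y, t))).deriv
      show deriv (fun s => pdT Φ x s t) y = deriv (fun s => pdT φ x s t) y + _
      rw [h1, h2, key, key2]
    have h2 := hE2 x y t
    have hQ : fderiv ℝ (fun q : ℝ × ℝ => fderiv ℝ F q (1, 0)) (x, k * y + l * t) (1, 0)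
        = -(fderiv ℝ (fun q : ℝ × ℝ => fderiv ℝ F q (0, 1)) (x, k * y + l * t) (0, 1)) := by
      have := hLap (x, k * y + l * t); linarith
    have hco : (1 - m * c ^ 2) * (k * k) - m * (l * l) - 2 * m * c * (l * k) = 1 := by
      rw [hkdef, hldef]
      field_simp
      linear_combination (-1 : ℝ) * hsq2
    rw [e11, e22, e33, e23]
    simp only [smul_eq_mul]
    linear_combination h2 + hQ
      + (fderiv ℝ (fun q : ℝ × ℝ => fderiv ℝ F q (0, 1)) (x, k * y + l * t) (0, 1)) * hco
end
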